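/- arXiv:2009.13821 — 8 statements merged into one kernel-verified Lean document; each statement's English description precedes it below -/
import Mathlib

section
/- Let G = (V, E_conf) be a finite graph with nonnegative vertex weights w_v and nonnegative edge weights w_e. For a subset S ⊆ V define cost(S) = Σ_{v ∉ S} w_v + Σ_{e ⊆ S} w_e (sum over edges both of whose endpoints lie in S). Then any minimal (with respect to set inclusion of chosen cover sets) solution of the associated set cover instance — elements are edges, and each edge e = {u,v} can be covered by the set 'delete u' (weight w_u), 'delete v' (weight w_v), or 'pay for e' (weight w_e) — induces a subset S with cost(S) equal to the weight of the cover, and hence min_S cost(S) equals the minimum weighted set cover. -/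
attribute [local instance] Classical.propDecidable

open Finset

variable {V : Type*} [DecidableEq V]

/-- The cost of keeping the subset `S` of vertices: the weight of deleted vertices
plus the weight of the edges both of whose endpoints survive. -/
noncomputable def graphCost (Vs : Finset V) (Econf : Finset (V × V))
    (wv : V → ℚ) (we : V × V → ℚ) (S : Finset V) : ℚ :=
  (∑ v ∈ Vs \ S, wv v) + ∑ e ∈ Econf.filter (fun e => e.1 ∈ S ∧ e.2 ∈ S), we e

/-- A set cover of the instance: each edge is covered by deleting one of its
endpoints (a vertex in `K`) or by paying for it (membership in `P`). -/
def IsCover (Econf : Finset (V × V)) (K : Finset V) (P : Finset (V × V)) : Prop :=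
  ∀ e ∈ Econf, e.1 ∈ K ∨ e.2 ∈ K ∨ e ∈ P

noncomputable def coverWeight (wv : V → ℚ) (we : V × V → ℚ)
    (K : Finset V) (P : Finset (V × V)) : ℚ :=
  (∑ v ∈ K, wv v) + ∑ e ∈ P, we e

/-!
Given the deleted vertices `K`, the pairs `(K, P)` that cover are those where `P` contains
every edge with no endpoint in `K`, and paying for exactly those edges is the cheapest
choice; its weight is `graphCost (Vs \ K)`. Minimality of `P` forces `P` to be exactly
that set, and conversely every `S` is the surviving set of the cover it induces.
-/

section Cover

variable {Vs K : Finset V} {Econf P : Finset (V × V)} {wv : V → ℚ} {we : V × V → ℚ}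

theorem IsCover.filter_subset (hcov : IsCover Econf K P) :
    Econf.filter (fun e => e.1 ∉ K ∧ e.2 ∉ K) ⊆ P := by
  intro e he
  obtain ⟨he, h1, h2⟩ := mem_filter.mp he
  exact ((hcov e he).resolve_left h1).resolve_left h2

/-- An edge that cannot be dropped from a cover is covered by nothing else,
so neither of its endpoints is deleted. -/
theorem IsCover.eq_filter_of_minimal (hcov : IsCover Econf K P) (hP : P ⊆ Econf)
    (hminP : ∀ e ∈ P, ¬ IsCover Econf K (P.erase e)) :
    P = Econf.filter (fun e => e.1 ∉ K ∧ e.2 ∉ K) := by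
  refine Subset.antisymm (fun e heP => ?_) hcov.filter_subset
  obtain ⟨f, hf, hf1, hf2, hfP⟩ : ∃ f ∈ Econf, f.1 ∉ K ∧ f.2 ∉ K ∧ f ∉ P.erase e := by
    simpa [IsCover] using hminP e heP
  obtain rfl : f = e := by
    by_contra hne
    exact hfP (mem_erase.mpr ⟨hne, hcov.filter_subset (mem_filter.mpr ⟨hf, hf1, hf2⟩)⟩)
  exact mem_filter.mpr ⟨hP heP, hf1, hf2⟩

theorem isCover_sdiff_filter (hend : ∀ e ∈ Econf, e.1 ∈ Vs ∧ e.2 ∈ Vs)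
    (S : Finset V) :
    IsCover Econf (Vs \ S) (Econf.filter (fun e => e.1 ∈ S ∧ e.2 ∈ S)) := by
  intro e he
  by_cases h1 : e.1 ∈ S
  · by_cases h2 : e.2 ∈ S
    · exact .inr (.inr (mem_filter.mpr ⟨he, h1, h2⟩))
    · exact .inr (.inl (mem_sdiff.mpr ⟨(hend e he).2, h2⟩))
  · exact .inl (mem_sdiff.mpr ⟨(hend e he).1, h1⟩)

theorem graphCost_sdiff (hend : ∀ e ∈ Econf, e.1 ∈ Vs ∧ e.2 ∈ Vs) (hK : K ⊆ Vs) :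
    graphCost Vs Econf wv we (Vs \ K) =
      coverWeight wv we K (Econf.filter (fun e => e.1 ∉ K ∧ e.2 ∉ K)) := by
  rw [graphCost, coverWeight, Finset.sdiff_sdiff_eq_self hK]
  congr 2
  refine filter_congr fun e he => ?_
  simp only [mem_sdiff, hend e he, true_and]

theorem IsCover.graphCost_sdiff_le (hcov : IsCover Econf K P) (hP : P ⊆ Econf)
    (hwe : ∀ e ∈ Econf, 0 ≤ we e) (hend : ∀ e ∈ Econf, e.1 ∈ Vs ∧ e.2 ∈ Vs) (hK : K ⊆ Vs) :
    graphCost Vs Econf wv we (Vs \ K) ≤ coverWeight wv we K P := by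
  rw [graphCost_sdiff hend hK]
  exact add_le_add le_rfl
    (sum_le_sum_of_subset_of_nonneg hcov.filter_subset fun e he _ => hwe e (hP he))

end Cover

theorem minimal_cover_induces_cost_general (Vs : Finset V) (Econf : Finset (V × V))
    (wv : V → ℚ) (we : V × V → ℚ)
    (hwe : ∀ e ∈ Econf, 0 ≤ we e)
    (hend : ∀ e ∈ Econf, e.1 ∈ Vs ∧ e.2 ∈ Vs) :
    (∀ (K : Finset V) (P : Finset (V × V)), K ⊆ Vs → P ⊆ Econf →
      IsCover Econf K P →
      (∀ v ∈ K, ¬ IsCover Econf (K.erase v) P) →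
      (∀ e ∈ P, ¬ IsCover Econf K (P.erase e)) →
      graphCost Vs Econf wv we (Vs \ K) = coverWeight wv we K P) ∧
    (∀ S ⊆ Vs, ∃ K P, K ⊆ Vs ∧ P ⊆ Econf ∧ IsCover Econf K P ∧
      coverWeight wv we K P ≤ graphCost Vs Econf wv we S) ∧
    (∀ (K : Finset V) (P : Finset (V × V)), K ⊆ Vs → P ⊆ Econf →
      IsCover Econf K P →
      ∃ S ⊆ Vs, graphCost Vs Econf wv we S ≤ coverWeight wv we K P) := by
  refine ⟨fun K P hK hP hcov _ hminP => ?_, fun S _ => ?_, fun K P hK hP hcov => ?_⟩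
  · rw [graphCost_sdiff hend hK, ← hcov.eq_filter_of_minimal hP hminP]
  · exact ⟨Vs \ S, _, sdiff_subset, filter_subset _ _, isCover_sdiff_filter hend S, le_rfl⟩
  · exact ⟨Vs \ K, sdiff_subset, hcov.graphCost_sdiff_le hP hwe hend hK⟩

/-- Any minimal set cover induces a subset `S = Vs \ K` whose cost equals the weight
of the cover; and the minimum of `graphCost` over subsets equals the minimum weighted
set cover (expressed by mutual domination). -/
theorem minimal_cover_induces_cost (Vs : Finset V) (Econf : Finset (V × V))
    (wv : V → ℚ) (we : V × V → ℚ)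
    (hwv : ∀ v ∈ Vs, 0 ≤ wv v) (hwe : ∀ e ∈ Econf, 0 ≤ we e)
    (hend : ∀ e ∈ Econf, e.1 ∈ Vs ∧ e.2 ∈ Vs)
    (hloop : ∀ e ∈ Econf, e.1 ≠ e.2) :
    (∀ (K : Finset V) (P : Finset (V × V)), K ⊆ Vs → P ⊆ Econf →
      IsCover Econf K P →
      (∀ v ∈ K, ¬ IsCover Econf (K.erase v) P) →
      (∀ e ∈ P, ¬ IsCover Econf K (P.erase e)) →
      graphCost Vs Econf wv we (Vs \ K) = coverWeight wv we K P) ∧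
    (∀ S ⊆ Vs, ∃ K P, K ⊆ Vs ∧ P ⊆ Econf ∧ IsCover Econf K P ∧
      coverWeight wv we K P ≤ graphCost Vs Econf wv we S) ∧
    (∀ (K : Finset V) (P : Finset (V × V)), K ⊆ Vs → P ⊆ Econf →
      IsCover Econf K P →
      ∃ S ⊆ Vs, graphCost Vs Econf wv we S ≤ coverWeight wv we K P) :=
  minimal_cover_induces_cost_general Vs Econf wv we hwe hend
end

section
/- Let D be a finite multiset of facts, and let B_1,…,B_q be a partition of D into 'subblocks' such that two distinct facts conflict (violate φ) if and only if they lie in different subblocks. Fix a number k. Define C[j,k] recursively by: C[0,0] = 0; C[0,k] = ∞ for k > 0; and C[j,k] = min over t ∈ {0,…,min(k,|B_j|)} of ( C[j-1, k-t] + t·(k-t)·w_φ + Σ_{f ∈ B_j ∖ top(t,B_j)} w_f ), where top(t,B_j) is a set of t facts of B_j of highest weight. Then C[q,k] equals the minimum of cost(E | B_1∪…∪B_q) over all subsets E of size exactly k. -/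
/-!
Split a repair `E ⊆ B₁ ∪ ⋯ ∪ B_{q+1}` as `E' ∪ T` with `E' ⊆ B₁ ∪ ⋯ ∪ B_q` and `T ⊆ B_{q+1}`.
Every fact of `T` conflicts with every fact of `E'` and with no other fact of `T`, so
`cost(E' ∪ T) = cost(E') + |T|·|E'|·wφ + Σ_{B_{q+1} ∖ T} w`. For fixed `|T| = t` the two
parts are minimised independently: the sum by keeping the `t` heaviest facts (an exchange
argument), and `cost(E')` by an optimal repair of size `k - t` of the first `q` blocks, whose
cost is `C[q, k - t]` by induction on `q`.
-/

attribute [local instance] Classical.propDecidable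

open Finset

/-- Number of unordered pairs of distinct facts of `E` violating `viol`. -/
noncomputable def numVio {F : Type*} [DecidableEq F] (viol : F → F → Prop)
    (E : Finset F) : ℕ :=
  ((E.powersetCard 2).filter (fun p => ∀ f ∈ p, ∀ g ∈ p, f ≠ g → viol f g)).card

/-- The dynamic-programming table `C[j,k]` of the single-FD algorithm:
`C[0,0] = 0`, `C[0,k] = ∞` for `k > 0`, and
`C[j,k] = min_{t ≤ min(k,|B_j|)} ( C[j-1,k-t] + t(k-t)·wφ + Σ_{f ∈ B_j ∖ top(t,B_j)} w f )`. -/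
noncomputable def DPC {F : Type*} [DecidableEq F] (w : F → ℚ) (wφ : ℚ)
    (top : ℕ → Finset F → Finset F) (B : ℕ → Finset F) : ℕ → ℕ → WithTop ℚ
  | 0, 0 => 0
  | 0, _ + 1 => ⊤
  | j + 1, k =>
      (Finset.range (k + 1)).inf fun t =>
        if t ≤ (B (j + 1)).card then
          DPC w wφ top B j (k - t) +
            ((((t * (k - t) : ℕ) : ℚ) * wφ +
                ∑ f ∈ B (j + 1) \ top t (B (j + 1)), w f : ℚ) : WithTop ℚ)
        else ⊤

section Weights

variable {F M : Type*} [DecidableEq F] [AddCommMonoid M] [LinearOrder M]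
  [IsOrderedCancelAddMonoid M]

theorem sum_le_sum_of_forall_sdiff_le {w : F → M} {s T U : Finset F} (hT : T ⊆ s)
    (hcard : #T = #U) (hheavy : ∀ f ∈ U, ∀ g ∈ s \ U, w g ≤ w f) :
    ∑ f ∈ T, w f ≤ ∑ f ∈ U, w f := by
  rw [← sum_sdiff_le_sum_sdiff]
  rcases (U \ T).eq_empty_or_nonempty with hUT | hUT
  · rw [card_eq_zero.mp ((card_sdiff_comm hcard).trans (card_eq_zero.mpr hUT)), hUT]
  · set c := (U \ T).inf' hUT w
    calc ∑ f ∈ T \ U, w f ≤ #(T \ U) • c := sum_le_card_nsmul _ _ _ fun g hg =>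
          le_inf' hUT _ fun f hf => hheavy f (mem_sdiff.mp hf).1 g (sdiff_subset_sdiff hT le_rfl hg)
      _ = #(U \ T) • c := by rw [card_sdiff_comm hcard]
      _ ≤ ∑ f ∈ U \ T, w f := card_nsmul_le_sum _ _ _ fun f hf => inf'_le w hf

theorem sum_sdiff_le_sum_sdiff_of_forall_sdiff_le {w : F → M} {s T U : Finset F} (hT : T ⊆ s)
    (hU : U ⊆ s) (hcard : #T = #U) (hheavy : ∀ f ∈ U, ∀ g ∈ s \ U, w g ≤ w f) :
    ∑ f ∈ s \ U, w f ≤ ∑ f ∈ s \ T, w f := by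
  rw [← sum_sdiff_le_sum_sdiff, sdiff_sdiff_sdiff_cancel_left hT,
    sdiff_sdiff_sdiff_cancel_left hU, sum_sdiff_le_sum_sdiff]
  exact sum_le_sum_of_forall_sdiff_le hT hcard hheavy

end Weights

section Violations

variable {F : Type*} [DecidableEq F]

theorem numVio_congr {viol viol' : F → F → Prop} {E : Finset F}
    (h : ∀ f ∈ E, ∀ g ∈ E, f ≠ g → (viol f g ↔ viol' f g)) :
    numVio viol E = numVio viol' E := by
  unfold numVio
  congr 1
  ext p
  simp only [mem_filter, and_congr_right_iff]
  intro hp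
  have hpE := (mem_powersetCard.mp hp).1
  exact forall₂_congr fun f hf => forall₂_congr fun g hg => imp_congr_right fun hfg =>
    h f (hpE hf) g (hpE hg) hfg

theorem pair_injOn_product {A B : Finset F} (hAB : Disjoint A B) :
    Set.InjOn (fun x : F × F => ({x.1, x.2} : Finset F)) (A ×ˢ B : Finset (F × F)) := by
  rintro ⟨a, b⟩ hab ⟨c, d⟩ hcd h
  simp only [coe_product, Set.mem_prod, mem_coe] at hab hcd
  dsimp only at h
  have := disjoint_left.mp hAB
  have ha : a ∈ ({c, d} : Finset F) := h ▸ mem_insert_self a {b}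
  have hb : b ∈ ({c, d} : Finset F) := h ▸ mem_insert_of_mem (mem_singleton_self b)
  simp only [mem_insert, mem_singleton] at ha hb
  grind

theorem numVio_union {viol : F → F → Prop} {A B : Finset F} (hAB : Disjoint A B)
    (hcross : ∀ a ∈ A, ∀ b ∈ B, viol a b ∧ viol b a)
    (hB : ∀ f ∈ B, ∀ g ∈ B, f ≠ g → ¬ viol f g) :
    numVio viol (A ∪ B) = numVio viol A + #A * #B := by
  have hsplit : ((A ∪ B).powersetCard 2).filter (fun p => ∀ f ∈ p, ∀ g ∈ p, f ≠ g → viol f g)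
      = (A.powersetCard 2).filter (fun p => ∀ f ∈ p, ∀ g ∈ p, f ≠ g → viol f g) ∪
        (A ×ˢ B).image fun x => {x.1, x.2} := by
    ext p
    simp only [mem_filter, mem_powersetCard, mem_union, mem_image, mem_product, card_eq_two]
    have := disjoint_left.mp hAB
    constructor
    · rintro ⟨⟨hsub, a, b, hab, rfl⟩, hviol⟩
      simp only [insert_subset_iff, singleton_subset_iff, mem_union] at hsub
      rcases hsub with ⟨ha | ha, hb | hb⟩
      · exact Or.inl ⟨⟨by simp [insert_subset_iff, ha, hb], a, b, hab, rfl⟩, hviol⟩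
      · exact Or.inr ⟨(a, b), ⟨ha, hb⟩, rfl⟩
      · exact Or.inr ⟨(b, a), ⟨hb, ha⟩, pair_comm b a⟩
      · exact absurd (hviol a (by simp) b (by simp) hab) (hB a ha b hb hab)
    · rintro (⟨⟨hsub, hcard⟩, hviol⟩ | ⟨⟨a, b⟩, ⟨ha, hb⟩, rfl⟩)
      · exact ⟨⟨hsub.trans subset_union_left, hcard⟩, hviol⟩
      · have hab : a ≠ b := fun h => this ha (h ▸ hb)
        refine ⟨⟨?_, a, b, hab, rfl⟩, ?_⟩
        · simp [insert_subset_iff, ha, hb]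
        · simp only [mem_insert, mem_singleton]
          rintro f (rfl | rfl) g (rfl | rfl) hfg
          exacts [absurd rfl hfg, (hcross f ha g hb).1, (hcross g ha f hb).2, absurd rfl hfg]
  have hdisj : Disjoint ((A.powersetCard 2).filter fun p => ∀ f ∈ p, ∀ g ∈ p, f ≠ g → viol f g)
      ((A ×ˢ B).image fun x => {x.1, x.2}) := by
    simp only [disjoint_left, mem_filter, mem_powersetCard, mem_image, mem_product, not_exists,
      not_and]
    rintro p ⟨⟨hsub, -⟩, -⟩ ⟨a, b⟩ ⟨-, hb⟩ rfl
    exact disjoint_left.mp hAB (hsub (mem_insert_of_mem (mem_singleton_self b))) hb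
  rw [numVio, numVio, hsplit, card_union_of_disjoint hdisj,
    card_image_of_injOn (pair_injOn_product hAB), card_product]

end Violations

section Blocks

variable {F : Type*}

def InDifferentBlocks (B : ℕ → Finset F) (q : ℕ) (f g : F) : Prop :=
  ∀ j ∈ range q, ¬ (f ∈ B (j + 1) ∧ g ∈ B (j + 1))

theorem inDifferentBlocks_iff {B : ℕ → Finset F} {q : ℕ} {f g : F} :
    InDifferentBlocks B q f g ↔ ¬ ∃ j < q, f ∈ B (j + 1) ∧ g ∈ B (j + 1) := by
  simp [InDifferentBlocks]

variable [DecidableEq F]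

noncomputable def blockUnion (B : ℕ → Finset F) (q : ℕ) : Finset F :=
  (range q).biUnion fun j => B (j + 1)

noncomputable def repairCost (w : F → ℚ) (wφ : ℚ) (B : ℕ → Finset F) (q : ℕ)
    (E : Finset F) : ℚ :=
  ∑ f ∈ blockUnion B q \ E, w f + wφ * numVio (InDifferentBlocks B q) E

noncomputable def minRepairCost (w : F → ℚ) (wφ : ℚ) (B : ℕ → Finset F) (q k : ℕ) :
    WithTop ℚ :=
  ((blockUnion B q).powerset.filter fun E => #E = k).inf fun E => (repairCost w wφ B q E : ℚ)

variable {B : ℕ → Finset F} {q : ℕ}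

theorem mem_blockUnion {f : F} : f ∈ blockUnion B q ↔ ∃ j < q, f ∈ B (j + 1) := by
  simp [blockUnion]

theorem blockUnion_zero (B : ℕ → Finset F) : blockUnion B 0 = ∅ := rfl

theorem blockUnion_succ (B : ℕ → Finset F) (q : ℕ) :
    blockUnion B (q + 1) = blockUnion B q ∪ B (q + 1) := by
  rw [blockUnion, blockUnion, range_add_one, biUnion_insert, union_comm]

theorem disjoint_blockUnion_block
    (hdisj : ∀ i < q + 1, ∀ j < q + 1, i ≠ j → Disjoint (B (i + 1)) (B (j + 1))) :
    Disjoint (blockUnion B q) (B (q + 1)) := by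
  rw [blockUnion, disjoint_biUnion_left]
  intro j hj
  have hj := mem_range.mp hj
  exact hdisj j (by omega) q (by omega) hj.ne

theorem numVio_inDifferentBlocks_union {E T : Finset F} (hD : Disjoint (blockUnion B q) (B (q + 1)))
    (hE : E ⊆ blockUnion B q) (hT : T ⊆ B (q + 1)) :
    numVio (InDifferentBlocks B (q + 1)) (E ∪ T) =
      numVio (InDifferentBlocks B q) E + #E * #T := by
  have hD' := disjoint_left.mp hD
  have hcross : ∀ f ∈ blockUnion B q, ∀ g ∈ B (q + 1),
      ¬ ∃ j < q + 1, f ∈ B (j + 1) ∧ g ∈ B (j + 1) := by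
    rintro f hf g hg ⟨j, hj, hfj, hgj⟩
    rcases Nat.lt_succ_iff_lt_or_eq.mp hj with hj | rfl
    · exact hD' (mem_blockUnion.mpr ⟨j, hj, hgj⟩) hg
    · exact hD' hf hfj
  rw [numVio_union (disjoint_of_subset_left hE (disjoint_of_subset_right hT hD))]
  · congr 1
    refine numVio_congr fun f hf g _ _ => ?_
    rw [InDifferentBlocks, range_add_one, forall_mem_insert]
    exact and_iff_right fun hfg => hD' (hE hf) hfg.1
  · intro f hf g hg
    simp only [inDifferentBlocks_iff, and_comm (a := g ∈ _)]
    exact ⟨hcross f (hE hf) g (hT hg), hcross f (hE hf) g (hT hg)⟩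
  · exact fun f hf g hg _ h => h q (self_mem_range_succ q) ⟨hT hf, hT hg⟩

theorem repairCost_union (w : F → ℚ) (wφ : ℚ) {E T : Finset F}
    (hD : Disjoint (blockUnion B q) (B (q + 1))) (hE : E ⊆ blockUnion B q) (hT : T ⊆ B (q + 1)) :
    repairCost w wφ B (q + 1) (E ∪ T) =
      repairCost w wφ B q E + (((#T * #E : ℕ) : ℚ) * wφ + ∑ f ∈ B (q + 1) \ T, w f) := by
  have hET : Disjoint E T := disjoint_of_subset_left hE (disjoint_of_subset_right hT hD)
  rw [repairCost, repairCost, numVio_inDifferentBlocks_union hD hE hT, blockUnion_succ,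
    sum_sdiff_eq_sub (union_subset_union hE hT), sum_sdiff_eq_sub hE, sum_sdiff_eq_sub hT,
    sum_union hD, sum_union hET]
  push_cast
  ring

end Blocks

section DynamicProgram

variable {F : Type*} [DecidableEq F] {w : F → ℚ} {wφ : ℚ} {top : ℕ → Finset F → Finset F}
  {B : ℕ → Finset F} {q : ℕ}

theorem DPC_succ (k : ℕ) :
    DPC w wφ top B (q + 1) k =
      (range (k + 1)).inf fun t =>
        if t ≤ #(B (q + 1)) then
          DPC w wφ top B q (k - t) +
            ((((t * (k - t) : ℕ) : ℚ) * wφ + ∑ f ∈ B (q + 1) \ top t (B (q + 1)), w f : ℚ) :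
              WithTop ℚ)
        else ⊤ := by
  rw [DPC]

theorem DPC_zero_eq_minRepairCost (k : ℕ) :
    DPC w wφ top B 0 k = minRepairCost w wφ B 0 k := by
  cases k <;> simp [DPC, minRepairCost, repairCost, blockUnion_zero, numVio, filter_singleton]

theorem sum_sdiff_top_le (htopsub : ∀ t s, top t s ⊆ s)
    (htopcard : ∀ t s, #(top t s) = min t #s)
    (htopw : ∀ t s, ∀ f ∈ top t s, ∀ g ∈ s \ top t s, w g ≤ w f) {s T : Finset F} (hT : T ⊆ s) :
    ∑ f ∈ s \ top #T s, w f ≤ ∑ f ∈ s \ T, w f :=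
  sum_sdiff_le_sum_sdiff_of_forall_sdiff_le hT (htopsub _ _)
    (by rw [htopcard, min_eq_left (card_le_card hT)]) (htopw _ _)

theorem DPC_succ_le_repairCost (htopsub : ∀ t s, top t s ⊆ s)
    (htopcard : ∀ t s, #(top t s) = min t #s)
    (htopw : ∀ t s, ∀ f ∈ top t s, ∀ g ∈ s \ top t s, w g ≤ w f)
    (hD : Disjoint (blockUnion B q) (B (q + 1)))
    (ih : ∀ k, DPC w wφ top B q k = minRepairCost w wφ B q k)
    {E : Finset F} (hE : E ⊆ blockUnion B (q + 1)) :
    DPC w wφ top B (q + 1) #E ≤ repairCost w wφ B (q + 1) E := by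
  obtain ⟨E', T, hE'D, hTB, rfl⟩ :
      ∃ E' T, E' ⊆ blockUnion B q ∧ T ⊆ B (q + 1) ∧ E' ∪ T = E := by
    refine ⟨E \ B (q + 1), E ∩ B (q + 1), fun f hf => ?_, inter_subset_right,
      sdiff_union_inter E _⟩
    have hf := mem_sdiff.mp hf
    simpa [blockUnion_succ, hf.2] using hE hf.1
  have hcard : #(E' ∪ T) - #T = #E' := by
    rw [card_union_of_disjoint (disjoint_of_subset_left hE'D (disjoint_of_subset_right hTB hD))]
    omega
  have hrest : DPC w wφ top B q #E' ≤ repairCost w wφ B q E' := by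
    rw [ih]
    exact inf_le (mem_filter.mpr ⟨mem_powerset.mpr hE'D, rfl⟩)
  rw [DPC_succ]
  refine (inf_le (mem_range.mpr (Nat.lt_succ_of_le (card_le_card subset_union_right)))).trans ?_
  rw [if_pos (card_le_card hTB), hcard, repairCost_union w wφ hD hE'D hTB,
    WithTop.coe_add (repairCost w wφ B q E')]
  exact add_le_add hrest (WithTop.coe_le_coe.mpr
    (add_le_add_right (sum_sdiff_top_le htopsub htopcard htopw hTB) _))

theorem minRepairCost_succ_le_DPC_succ (htopsub : ∀ t s, top t s ⊆ s)
    (htopcard : ∀ t s, #(top t s) = min t #s) (hD : Disjoint (blockUnion B q) (B (q + 1)))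
    (ih : ∀ k, DPC w wφ top B q k = minRepairCost w wφ B q k) (k : ℕ) :
    minRepairCost w wφ B (q + 1) k ≤ DPC w wφ top B (q + 1) k := by
  rw [DPC_succ]
  refine Finset.le_inf fun t ht => ?_
  have htk := mem_range_succ_iff.mp ht
  split_ifs with htB
  case neg => exact le_top
  rw [ih]
  unfold minRepairCost
  rcases ((blockUnion B q).powerset.filter fun E => #E = k - t).eq_empty_or_nonempty
    with hempty | hne
  · rw [hempty, inf_empty, top_add]
    exact le_top
  obtain ⟨E, hE, hEmin⟩ := exists_mem_eq_inf _ hne fun E => (repairCost w wφ B q E : WithTop ℚ)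
  obtain ⟨hED, hEcard⟩ := mem_filter.mp hE
  have hED := mem_powerset.mp hED
  have hUB := htopsub t (B (q + 1))
  have hUcard : #(top t (B (q + 1))) = t := by rw [htopcard]; omega
  have hmem : E ∪ top t (B (q + 1)) ∈
      (blockUnion B (q + 1)).powerset.filter fun E => #E = k := by
    rw [mem_filter, mem_powerset, blockUnion_succ, card_union_of_disjoint
      (disjoint_of_subset_left hED (disjoint_of_subset_right hUB hD)), hEcard, hUcard]
    exact ⟨union_subset_union hED hUB, by omega⟩
  refine (inf_le hmem).trans_eq ?_
  rw [hEmin, repairCost_union w wφ hD hED hUB, hEcard, hUcard, WithTop.coe_add]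

theorem DPC_eq_minRepairCost (htopsub : ∀ t s, top t s ⊆ s)
    (htopcard : ∀ t s, #(top t s) = min t #s)
    (htopw : ∀ t s, ∀ f ∈ top t s, ∀ g ∈ s \ top t s, w g ≤ w f)
    (hdisj : ∀ i < q, ∀ j < q, i ≠ j → Disjoint (B (i + 1)) (B (j + 1))) (k : ℕ) :
    DPC w wφ top B q k = minRepairCost w wφ B q k := by
  induction q generalizing k with
  | zero => exact DPC_zero_eq_minRepairCost k
  | succ q ih =>
    have hD := disjoint_blockUnion_block hdisj
    have ih' := ih fun i hi j hj => hdisj i (by omega) j (by omega)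
    refine le_antisymm (Finset.le_inf fun E hE => ?_)
      (minRepairCost_succ_le_DPC_succ htopsub htopcard hD ih' k)
    obtain ⟨hED, rfl⟩ := mem_filter.mp hE
    exact DPC_succ_le_repairCost htopsub htopcard htopw hD ih' (mem_powerset.mp hED)

end DynamicProgram

theorem dp_single_fd_correct_general {F : Type*} [DecidableEq F] (w : F → ℚ) (wφ : ℚ)
    (top : ℕ → Finset F → Finset F) (B : ℕ → Finset F) (q k : ℕ)
    (hdisj : ∀ i < q, ∀ j < q, i ≠ j → Disjoint (B (i + 1)) (B (j + 1)))
    (htopsub : ∀ t s, top t s ⊆ s)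
    (htopcard : ∀ t s, (top t s).card = min t s.card)
    (htopw : ∀ t s, ∀ f ∈ top t s, ∀ g ∈ s \ top t s, w g ≤ w f) :
    DPC w wφ top B q k =
      ((((Finset.range q).biUnion (fun j => B (j + 1))).powerset.filter
          (fun E => E.card = k)).inf
        (fun E =>
          (((∑ f ∈ ((Finset.range q).biUnion (fun j => B (j + 1))) \ E, w f) +
              wφ * (numVio
                (fun f g => ∀ j ∈ Finset.range q,
                  ¬ (f ∈ B (j + 1) ∧ g ∈ B (j + 1))) E : ℚ) : ℚ) : WithTop ℚ))) :=
  DPC_eq_minRepairCost htopsub htopcard htopw hdisj k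

/-- Correctness of the dynamic program: `C[q,k]` equals the minimum of
`cost(E | B_1 ∪ … ∪ B_q)` over subsets `E` of size exactly `k`, where two distinct
facts conflict iff they lie in different subblocks. -/
theorem dp_single_fd_correct {F : Type*} [DecidableEq F] (w : F → ℚ) (wφ : ℚ)
    (top : ℕ → Finset F → Finset F) (B : ℕ → Finset F) (q k : ℕ)
    (hw : ∀ f, 0 ≤ w f) (hwφ : 0 ≤ wφ)
    (hdisj : ∀ i < q, ∀ j < q, i ≠ j → Disjoint (B (i + 1)) (B (j + 1)))
    (htopsub : ∀ t s, top t s ⊆ s)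
    (htopcard : ∀ t s, (top t s).card = min t s.card)
    (htopw : ∀ t s, ∀ f ∈ top t s, ∀ g ∈ s \ top t s, w g ≤ w f) :
    DPC w wφ top B q k =
      ((((Finset.range q).biUnion (fun j => B (j + 1))).powerset.filter
          (fun E => E.card = k)).inf
        (fun E =>
          (((∑ f ∈ ((Finset.range q).biUnion (fun j => B (j + 1))) \ E, w f) +
              wφ * (numVio
                (fun f g => ∀ j ∈ Finset.range q,
                  ¬ (f ∈ B (j + 1) ∧ g ∈ B (j + 1))) E : ℚ) : ℚ) : WithTop ℚ))) :=
  dp_single_fd_correct_general w wφ top B q k hdisj htopsub htopcard htopw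
end

section
/- In the flow network N_k constructed from a database D over R(A,B) with FDs φ₁ = A→B and φ₂ = B→A, for every subset E ⊆ D with |E| = k, the assignment f_E (routing one unit through the edge (v_a, u_b) for each fact R(a,b) ∈ E, filling the parallel unit-capacity edges (s', v_a^i), (v_a^i, v_a) for i = 1,…,#_{E.A}(a) and similarly on the B side, and k units through (s,s')) is a valid integral flow of value k, and its cost equals w_D(E) = Σ_{f∈E}(−w_f) + w_{φ₁}·|vio(E,φ₁)| + w_{φ₂}·|vio(E,φ₂)|. -/
attribute [local instance] Classical.propDecidable

open Finset

/-- Nodes of the flow network `N_k`: source `s`, auxiliary node `sp = s'`,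
sink `t`, left copies `vAi a i` and left block nodes `vA a`, right block nodes
`uB b` and right copies `uBi b i` (the index `i : Fin n` stands for `i+1`). -/
inductive FNode (α β : Type*) (n : ℕ) where
  | s | sp | t
  | vAi (a : α) (i : Fin n)
  | vA (a : α)
  | uB (b : β)
  | uBi (b : β) (i : Fin n)
  deriving DecidableEq, Fintype

variable {α β : Type*} [DecidableEq α] [DecidableEq β]

/-- `#_{D.A}(a)`, the number of facts of `D` with `A`-value `a`. -/
def cntA (D : Finset (α × β)) (a : α) : ℕ := (D.filter (fun f => f.1 = a)).card

/-- `#_{D.B}(b)`. -/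
def cntB (D : Finset (α × β)) (b : β) : ℕ := (D.filter (fun f => f.2 = b)).card

/-- Edge capacities of `N_k`: `(s,s')` has capacity `k`, all other edges capacity 1. -/
def capN (D : Finset (α × β)) (k : ℕ) :
    FNode α β D.card → FNode α β D.card → ℕ
  | .s, .sp => k
  | .sp, .vAi a i => if i.val < cntA D a then 1 else 0
  | .vAi a i, .vA a' => if a = a' ∧ i.val < cntA D a then 1 else 0
  | .vA a, .uB b => if (a, b) ∈ D then 1 else 0
  | .uB b, .uBi b' i => if b = b' ∧ i.val < cntB D b then 1 else 0
  | .uBi b i, .t => if i.val < cntB D b then 1 else 0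
  | _, _ => 0

/-- Edge costs of `N_k`: `(v_a^{i+1}, v_a)` costs `i·w₁`, `(v_a,u_b)` costs `−w f`
for the fact `f = (a,b)`, `(u_b, u_b^{i+1})` costs `i·w₂`; all other edges cost 0. -/
noncomputable def ecostN (D : Finset (α × β)) (w : α × β → ℚ) (w1 w2 : ℚ) :
    FNode α β D.card → FNode α β D.card → ℚ
  | .vAi a i, .vA a' => if a = a' then (i.val : ℚ) * w1 else 0
  | .vA a, .uB b => if (a, b) ∈ D then -w (a, b) else 0
  | .uB b, .uBi b' i => if b = b' then (i.val : ℚ) * w2 else 0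
  | _, _ => 0

/-- An integral flow on `N_k`: capacities respected and flow conserved at every
node other than the source and the sink. -/
def IsFlow [Fintype α] [Fintype β] (D : Finset (α × β)) (k : ℕ)
    (g : FNode α β D.card → FNode α β D.card → ℕ) : Prop :=
  (∀ u v, g u v ≤ capN D k u v) ∧
  (∀ v : FNode α β D.card, v ≠ FNode.s → v ≠ FNode.t →
    (∑ u, g u v) = ∑ u, g v u)

/-- The value of a flow. -/
def flowValue [Fintype α] [Fintype β] {n : ℕ}
    (g : FNode α β n → FNode α β n → ℕ) : ℕ :=
  ∑ v, g FNode.s v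

/-- The cost of a flow: `Σ_e g(e)·c(e)`. -/
noncomputable def flowCost [Fintype α] [Fintype β] (D : Finset (α × β))
    (w : α × β → ℚ) (w1 w2 : ℚ)
    (g : FNode α β D.card → FNode α β D.card → ℕ) : ℚ :=
  ∑ u, ∑ v, (g u v : ℚ) * ecostN D w w1 w2 u v

/-- `w_D(E)` for `Δ = {A→B, B→A}` with weights `w₁, w₂`. -/
noncomputable def wDAB (w : α × β → ℚ) (w1 w2 : ℚ) (E : Finset (α × β)) : ℚ :=
  (∑ f ∈ E, -(w f)) +
    w1 * (numVio (fun f g => f.1 = g.1 ∧ f.2 ≠ g.2) E : ℚ) +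
    w2 * (numVio (fun f g => f.2 = g.2 ∧ f.1 ≠ g.1) E : ℚ)

/-- The flow `f_E` induced by a subset `E ⊆ D`. -/
def fE (D E : Finset (α × β)) :
    FNode α β D.card → FNode α β D.card → ℕ
  | .s, .sp => E.card
  | .sp, .vAi a i => if i.val < cntA E a then 1 else 0
  | .vAi a i, .vA a' => if a = a' ∧ i.val < cntA E a then 1 else 0
  | .vA a, .uB b => if (a, b) ∈ E then 1 else 0
  | .uB b, .uBi b' i => if b = b' ∧ i.val < cntB E b then 1 else 0
  | .uBi b i, .t => if i.val < cntB E b then 1 else 0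
  | _, _ => 0

/-!
On the `A` side, `f_E` sends `#_{E.A}(a)` units into `v_a` through the first `#_{E.A}(a)` parallel
copies `v_a^i` and lets them leave along the facts of `E` with `A`-value `a`; the `B` side is
symmetric, so flow is conserved, and `E ⊆ D` keeps every used edge inside the capacities of `N_k`.
The copies used at `v_a` cost `w₁ · (0 + 1 + ⋯ + (ℓ - 1)) = w₁ · ℓ.choose 2` with `ℓ = #_{E.A}(a)`,
which is `w₁` times the number of `φ₁`-violating pairs in the block of facts of `E` with `A`-value
`a`, since two distinct facts violate `φ₁` exactly when they share their `A`-value.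
Summing over the blocks and adding the costs `-w_f` of the fact edges gives `w_D(E)`.
-/

theorem Fin.sum_univ_ite_val_lt {M : Type*} [AddCommMonoid M] {n ℓ : ℕ} (h : ℓ ≤ n)
    (g : ℕ → M) : ∑ i : Fin n, (if i.val < ℓ then g i else 0) = ∑ i ∈ range ℓ, g i := by
  rw [Fin.sum_univ_eq_sum_range (fun i => if i < ℓ then g i else 0), ← sum_filter]
  congr 1
  ext i
  simp only [mem_filter, mem_range]
  omega

theorem Finset.sum_range_id_eq_choose_two (ℓ : ℕ) : ∑ i ∈ range ℓ, i = ℓ.choose 2 := by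
  rw [sum_range_id, Nat.choose_two_right]

theorem Fin.sum_univ_ite_val_lt_mul_eq_choose_two {R : Type*} [Semiring R] {n ℓ : ℕ} (h : ℓ ≤ n)
    (c : R) : ∑ i : Fin n, (if i.val < ℓ then (i.val : R) * c else 0) = ℓ.choose 2 * c := by
  rw [Fin.sum_univ_ite_val_lt h (fun i => (i : R) * c), ← sum_mul, ← Nat.cast_sum,
    sum_range_id_eq_choose_two]

theorem numVio_eq_sum_choose_two {F K : Type*} [DecidableEq F] [Fintype K] [DecidableEq K]
    (viol : F → F → Prop) (κ : F → K) (hviol : ∀ f g, f ≠ g → (viol f g ↔ κ f = κ g))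
    (E : Finset F) : numVio viol E = ∑ k, (#{f ∈ E | κ f = k}).choose 2 := by
  have hfiber : (E.powersetCard 2).filter (fun p => ∀ f ∈ p, ∀ g ∈ p, f ≠ g → viol f g) =
      univ.biUnion fun k => powersetCard 2 {f ∈ E | κ f = k} := by
    ext p
    simp only [mem_filter, mem_powersetCard, mem_biUnion, mem_univ, true_and]
    constructor
    · rintro ⟨⟨hpE, hp⟩, hpviol⟩
      obtain ⟨x, y, hxy, rfl⟩ := card_eq_two.1 hp
      refine ⟨κ x, fun f hf => mem_filter.2 ⟨hpE hf, ?_⟩, hp⟩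
      rcases mem_insert.1 hf with rfl | hf
      · rfl
      · obtain rfl := mem_singleton.1 hf
        exact ((hviol x f hxy).1 (hpviol x (by simp) f (by simp) hxy)).symm
    · rintro ⟨k, hpk, hp⟩
      refine ⟨⟨hpk.trans (filter_subset _ _), hp⟩, fun f hf g hg hfg => (hviol f g hfg).2 ?_⟩
      rw [(mem_filter.1 (hpk hf)).2, (mem_filter.1 (hpk hg)).2]
  have hdisj : ((univ : Finset K) : Set K).PairwiseDisjoint
      fun k => powersetCard 2 {f ∈ E | κ f = k} := by
    intro k _ k' _ hkk'
    refine disjoint_left.2 fun p hp hp' => ?_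
    obtain ⟨f, hf⟩ := card_pos.1 (by rw [(mem_powersetCard.1 hp).2]; omega : 0 < #p)
    exact hkk' ((mem_filter.1 ((mem_powersetCard.1 hp).1 hf)).2.symm.trans
      (mem_filter.1 ((mem_powersetCard.1 hp').1 hf)).2)
  rw [numVio, hfiber, card_biUnion hdisj]
  simp only [card_powersetCard]

namespace FNode

def equivSum (σ τ : Type*) (n : ℕ) :
    FNode σ τ n ≃ Unit ⊕ Unit ⊕ Unit ⊕ (σ × Fin n) ⊕ σ ⊕ τ ⊕ (τ × Fin n) where
  toFun
    | .s => .inl ()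
    | .sp => .inr (.inl ())
    | .t => .inr (.inr (.inl ()))
    | .vAi a i => .inr (.inr (.inr (.inl (a, i))))
    | .vA a => .inr (.inr (.inr (.inr (.inl a))))
    | .uB b => .inr (.inr (.inr (.inr (.inr (.inl b)))))
    | .uBi b i => .inr (.inr (.inr (.inr (.inr (.inr (b, i))))))
  invFun
    | .inl () => .s
    | .inr (.inl ()) => .sp
    | .inr (.inr (.inl ())) => .t
    | .inr (.inr (.inr (.inl (a, i)))) => .vAi a i
    | .inr (.inr (.inr (.inr (.inl a)))) => .vA a
    | .inr (.inr (.inr (.inr (.inr (.inl b))))) => .uB b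
    | .inr (.inr (.inr (.inr (.inr (.inr (b, i)))))) => .uBi b i
  left_inv x := by cases x <;> rfl
  right_inv y := by rcases y with ⟨⟩ | ⟨⟩ | ⟨⟩ | ⟨a, i⟩ | a | b | ⟨b, i⟩ <;> rfl

theorem sum_univ {σ τ M : Type*} [Fintype σ] [Fintype τ] [AddCommMonoid M] {n : ℕ}
    (f : FNode σ τ n → M) :
    ∑ x, f x = f .s + f .sp + f .t + (∑ a, ∑ i, f (.vAi a i)) + (∑ a, f (.vA a)) +
      (∑ b, f (.uB b)) + ∑ b, ∑ i, f (.uBi b i) := by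
  rw [← (equivSum σ τ n).symm.sum_comp f]
  simp only [Fintype.sum_sum_type, Fintype.sum_prod_type, univ_unique, sum_singleton, equivSum,
    Equiv.coe_fn_symm_mk]
  abel

end FNode

section

omit [DecidableEq β]

theorem cntA_mono {D E : Finset (α × β)} (hE : E ⊆ D) (a : α) : cntA E a ≤ cntA D a :=
  card_le_card (filter_subset_filter _ hE)

theorem cntA_le_card_of_subset {D E : Finset (α × β)} (hE : E ⊆ D) (a : α) : cntA E a ≤ #D :=
  (cntA_mono hE a).trans (card_filter_le _ _)

theorem sum_cntA [Fintype α] (E : Finset (α × β)) : ∑ a, cntA E a = #E :=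
  (card_eq_sum_card_fiberwise fun _ _ => mem_univ _).symm

end

section

omit [DecidableEq α]

theorem cntB_mono {D E : Finset (α × β)} (hE : E ⊆ D) (b : β) : cntB E b ≤ cntB D b :=
  card_le_card (filter_subset_filter _ hE)

theorem cntB_le_card_of_subset {D E : Finset (α × β)} (hE : E ⊆ D) (b : β) : cntB E b ≤ #D :=
  (cntB_mono hE b).trans (card_filter_le _ _)

theorem sum_cntB [Fintype β] (E : Finset (α × β)) : ∑ b, cntB E b = #E :=
  (card_eq_sum_card_fiberwise fun _ _ => mem_univ _).symm

end

theorem cntA_eq_card [Fintype β] (E : Finset (α × β)) (a : α) :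
    cntA E a = #{b | (a, b) ∈ E} :=
  card_nbij' Prod.snd (fun b => (a, b)) (by rintro ⟨_, b⟩; grind) (by intro; simp)
    (by rintro ⟨_, b⟩; grind) (by intro; simp)

theorem cntB_eq_card [Fintype α] (E : Finset (α × β)) (b : β) :
    cntB E b = #{a | (a, b) ∈ E} :=
  card_nbij' Prod.fst (fun a => (a, b)) (by rintro ⟨a, _⟩; grind) (by intro; simp)
    (by rintro ⟨a, _⟩; grind) (by intro; simp)

theorem numVio_fst [Fintype α] (E : Finset (α × β)) :
    numVio (fun f g => f.1 = g.1 ∧ f.2 ≠ g.2) E = ∑ a, (cntA E a).choose 2 :=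
  numVio_eq_sum_choose_two _ Prod.fst
    (fun _ _ hfg => ⟨And.left, fun h => ⟨h, fun h' => hfg (Prod.ext h h')⟩⟩) E

theorem numVio_snd [Fintype β] (E : Finset (α × β)) :
    numVio (fun f g => f.2 = g.2 ∧ f.1 ≠ g.1) E = ∑ b, (cntB E b).choose 2 :=
  numVio_eq_sum_choose_two _ Prod.snd
    (fun _ _ hfg => ⟨And.left, fun h => ⟨h, fun h' => hfg (Prod.ext h' h)⟩⟩) E

theorem fE_le_capN {D E : Finset (α × β)} (hE : E ⊆ D) (u v : FNode α β #D) :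
    fE D E u v ≤ capN D #E u v := by
  have hA := cntA_mono hE
  have hB := cntB_mono hE
  cases u <;> cases v <;> simp only [fE, capN, le_refl] <;> split_ifs <;> grind

section

variable [Fintype α] [Fintype β]

theorem fE_inflow_eq_outflow {D E : Finset (α × β)} (hE : E ⊆ D) (v : FNode α β #D)
    (hs : v ≠ .s) (ht : v ≠ .t) : ∑ u, fE D E u v = ∑ u, fE D E v u := by
  have hA a : min #D (cntA E a) = cntA E a := min_eq_right (cntA_le_card_of_subset hE a)
  have hB b : min #D (cntB E b) = cntB E b := min_eq_right (cntB_le_card_of_subset hE b)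
  cases v with
  | s | t => contradiction
  | sp => simp [FNode.sum_univ, fE, Fin.card_filter_val_lt, hA, sum_cntA]
  | vAi a i => simp [FNode.sum_univ, fE, ite_and]
  | vA a => simp [FNode.sum_univ, fE, ite_and, Fin.card_filter_val_lt, hA, ← cntA_eq_card]
  | uB b => simp [FNode.sum_univ, fE, ite_and, Fin.card_filter_val_lt, hB, ← cntB_eq_card]
  | uBi b i => simp [FNode.sum_univ, fE, ite_and]

theorem flowValue_fE (D E : Finset (α × β)) : flowValue (fE D E) = #E := by
  simp [flowValue, FNode.sum_univ, fE]

theorem flowCost_fE_eq_sum_edges {D E : Finset (α × β)} (hE : E ⊆ D) (w : α × β → ℚ)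
    (w1 w2 : ℚ) :
    flowCost D w w1 w2 (fE D E) =
      (∑ a, ∑ i : Fin #D, if i.val < cntA E a then (i.val : ℚ) * w1 else 0) +
        (∑ f ∈ E, -w f) + ∑ b, ∑ i : Fin #D, if i.val < cntB E b then (i.val : ℚ) * w2 else 0 := by
  have hED (p : α × β) : (if p ∈ D then -if p ∈ E then w p else 0 else 0) =
      if p ∈ E then -w p else 0 := by
    by_cases hp : p ∈ E
    · simp [hp, hE hp]
    · simp [hp]
  have hfacts : ∑ a, ∑ b, (if (a, b) ∈ E then -w (a, b) else 0) = -∑ f ∈ E, w f := by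
    rw [← Fintype.sum_prod_type (fun f => if f ∈ E then -w f else 0), Fintype.sum_ite_mem,
      sum_neg_distrib]
  simp [flowCost, FNode.sum_univ, fE, ecostN, ite_and, hED, hfacts]

theorem flowCost_fE {D E : Finset (α × β)} (hE : E ⊆ D) (w : α × β → ℚ) (w1 w2 : ℚ) :
    flowCost D w w1 w2 (fE D E) = wDAB w w1 w2 E := by
  simp only [flowCost_fE_eq_sum_edges hE, wDAB, numVio_fst, numVio_snd, Nat.cast_sum,
    Fin.sum_univ_ite_val_lt_mul_eq_choose_two (cntA_le_card_of_subset hE _),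
    Fin.sum_univ_ite_val_lt_mul_eq_choose_two (cntB_le_card_of_subset hE _)]
  rw [← sum_mul, ← sum_mul]
  ring

end

theorem fE_is_flow_and_cost_general [Fintype α] [Fintype β]
    (D E : Finset (α × β)) (hE : E ⊆ D)
    (w : α × β → ℚ) (w1 w2 : ℚ) :
    IsFlow D E.card (fE D E) ∧
    flowValue (fE D E) = E.card ∧
    flowCost D w w1 w2 (fE D E) = wDAB w w1 w2 E :=
  ⟨⟨fE_le_capN hE, fE_inflow_eq_outflow hE⟩, flowValue_fE D E, flowCost_fE hE w w1 w2⟩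

/-- Lemma 3 of the paper: for every `E ⊆ D` with `|E| = k`, `f_E` is a valid
integral flow of value `k` in `N_k`, and its cost equals `w_D(E)`. -/
theorem fE_is_flow_and_cost [Fintype α] [Fintype β]
    (D E : Finset (α × β)) (hE : E ⊆ D)
    (w : α × β → ℚ) (w1 w2 : ℚ)
    (hw : ∀ f ∈ D, 0 ≤ w f) (h1 : 0 ≤ w1) (h2 : 0 ≤ w2) :
    IsFlow D E.card (fE D E) ∧
    flowValue (fE D E) = E.card ∧
    flowCost D w w1 w2 (fE D E) = wDAB w w1 w2 E :=
  fE_is_flow_and_cost_general D E hE w w1 w2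
end

section
/- Let R̂(A_1,…,A_k) be a schema and Δ̂ = {X→Y, X'→Y'} be a matching constraint, i.e., X∪Y = X'∪Y' = X∪X' = {A_1,…,A_k}. For any two distinct facts f̂, ĝ of a database D̂ over R̂: {f̂, ĝ} violates X→Y if and only if f̂[X] = ĝ[X] and f̂[X'] ≠ ĝ[X']. -/
open Finset

/-- The facts `f, g` agree on all attributes of `X`. -/
def agreeOn {Attr Val : Type*} (X : Finset Attr) (f g : Attr → Val) : Prop :=
  ∀ A ∈ X, f A = g A

section AgreeOn

variable {Attr Val : Type*} {f g : Attr → Val}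

theorem agreeOn_union [DecidableEq Attr] {X Z : Finset Attr} :
    agreeOn (X ∪ Z) f g ↔ agreeOn X f g ∧ agreeOn Z f g := by
  simp only [agreeOn, mem_union, or_imp, forall_and]

theorem agreeOn_univ [Fintype Attr] : agreeOn univ f g ↔ f = g := by
  simp only [agreeOn, mem_univ, true_implies, funext_iff]

theorem not_agreeOn_of_union_eq_univ [Fintype Attr] [DecidableEq Attr] {X Z : Finset Attr}
    (hXZ : X ∪ Z = univ) (hfg : f ≠ g) (hX : agreeOn X f g) : ¬ agreeOn Z f g := fun hZ =>
  hfg (agreeOn_univ.mp (hXZ ▸ agreeOn_union.mpr ⟨hX, hZ⟩))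

end AgreeOn

theorem matching_constraint_violation_iff_general {Attr Val : Type*} [Fintype Attr] [DecidableEq Attr]
    (X Y X' : Finset Attr)
    (hXY : X ∪ Y = Finset.univ)
    (hXX' : X ∪ X' = Finset.univ)
    (f g : Attr → Val) (hfg : f ≠ g) :
    (agreeOn X f g ∧ ¬ agreeOn Y f g) ↔ (agreeOn X f g ∧ ¬ agreeOn X' f g) :=
  and_congr_right fun hX =>
    iff_of_true (not_agreeOn_of_union_eq_univ hXY hfg hX)
      (not_agreeOn_of_union_eq_univ hXX' hfg hX)

/-- For a matching constraint `Δ̂ = {X→Y, X'→Y'}` (i.e. `X∪Y = X'∪Y' = X∪X' = `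
all attributes), a pair of distinct facts violates `X→Y` iff it agrees on `X`
and disagrees on `X'`. -/
theorem matching_constraint_violation_iff {Attr Val : Type*} [Fintype Attr] [DecidableEq Attr]
    (X Y X' Y' : Finset Attr)
    (hXY : X ∪ Y = Finset.univ) (hX'Y' : X' ∪ Y' = Finset.univ)
    (hXX' : X ∪ X' = Finset.univ)
    (f g : Attr → Val) (hfg : f ≠ g) :
    (agreeOn X f g ∧ ¬ agreeOn Y f g) ↔ (agreeOn X f g ∧ ¬ agreeOn X' f g) :=
  matching_constraint_violation_iff_general X Y X' hXY hXX' f g hfg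
end

section
/- Let R̂(A_1,…,A_k) be a schema and Δ̂ = {X→Y, X'→Y'} a matching constraint (X∪Y = X'∪Y' = X∪X' = {A_1,…,A_k}). Define the map sending each fact f̂ to the pair f = (f̂[X], f̂[X']) over binary schema R(A,B). This map is injective on any database D̂, and for every subset Ê ⊆ D̂ with image E: |vio(Ê, X→Y)| = |vio(E, A→B)| and |vio(Ê, X'→Y')| = |vio(E, B→A)|. Consequently, with w_f = w_{f̂}, w_{A→B} = w_{X→Y}, w_{B→A} = w_{X'→Y'}, we have cost(Ê | D̂) = cost(E | D), and Ê is an optimal subset of D̂ iff E is an optimal subset of D. -/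
/-! Since `X ∪ X'` covers all attributes, `f̂ ↦ (f̂[X], f̂[X'])` is injective. Two facts agreeing on
`X` are equal exactly when they also agree on `Y`, and exactly when they also agree on `X'`; hence
`f̂, ĝ` violate `X → Y` iff their images have equal first and different second components, and
symmetrically for `X' → Y'`. The costs then agree term by term, and optimality transfers because
the subsets of the image of `D̂` are exactly the images of subsets of `D̂`. -/

attribute [local instance] Classical.propDecidable

open Finset

variable {Attr Val : Type*} [Fintype Attr] [DecidableEq Attr] [DecidableEq Val]

/-- The reduction map: a fact `fh` is sent to the pair `(fh[X], fh[X'])` over the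
binary schema `R(A,B)`. -/
def toPair (X X' : Finset Attr) (f : Attr → Val) :
    ((↥X → Val) × (↥X' → Val)) :=
  ((fun A => f A.1), (fun A => f A.1))

/-- Cost of `Eh ⊆ Dh` w.r.t. the matching constraint `{X→Y, X'→Y'}`. -/
noncomputable def costHat (X Y X' Y' : Finset Attr) (Dh : Finset (Attr → Val))
    (wh : (Attr → Val) → ℚ) (w1 w2 : ℚ) (Eh : Finset (Attr → Val)) : ℚ :=
  (∑ f ∈ Dh \ Eh, wh f) +
    w1 * (numVio (fun f g => f ≠ g ∧ agreeOn X f g ∧ ¬ agreeOn Y f g) Eh : ℚ) +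
    w2 * (numVio (fun f g => f ≠ g ∧ agreeOn X' f g ∧ ¬ agreeOn Y' f g) Eh : ℚ)

/-- Cost of a binary subset `E ⊆ D` w.r.t. `{A→B, B→A}`. -/
noncomputable def costBin (X X' : Finset Attr)
    (D : Finset ((↥X → Val) × (↥X' → Val)))
    (wp : ((↥X → Val) × (↥X' → Val)) → ℚ) (w1 w2 : ℚ)
    (E : Finset ((↥X → Val) × (↥X' → Val))) : ℚ :=
  (∑ p ∈ D \ E, wp p) +
    w1 * (numVio (fun p q => p.1 = q.1 ∧ p.2 ≠ q.2) E : ℚ) +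
    w2 * (numVio (fun p q => p.2 = q.2 ∧ p.1 ≠ q.1) E : ℚ)

theorem numVio_image_of_injective {F G : Type*} [DecidableEq F] [DecidableEq G]
    {φ : F → G} (hφ : Function.Injective φ) {v : F → F → Prop} {v' : G → G → Prop}
    (hv : ∀ f g, v' (φ f) (φ g) ↔ v f g) (E : Finset F) :
    numVio v' (E.image φ) = numVio v E := by
  rw [show E.image φ = E.map ⟨φ, hφ⟩ by ext; simp, numVio, numVio, powersetCard_map]
  simp only [filter_map, card_map]
  congr 1
  ext p
  simp only [mem_filter, RelEmbedding.coe_toEmbedding, Function.comp_apply, mapEmbedding_apply,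
    mem_map, Function.Embedding.coeFn_mk, forall_exists_index, and_imp, forall_apply_eq_imp_iff₂,
    hφ.ne_iff, hv]

omit [DecidableEq Val] in
theorem eq_of_agreeOn_of_union_eq_univ {X Y : Finset Attr} (hXY : X ∪ Y = univ)
    {f g : Attr → Val} (hX : agreeOn X f g) (hY : agreeOn Y f g) : f = g := by
  funext A
  rcases mem_union.mp (hXY ▸ mem_univ A) with hA | hA
  exacts [hX A hA, hY A hA]

omit [DecidableEq Val] in
theorem fd_violation_iff {X Y Z : Finset Attr} (hXY : X ∪ Y = univ) (hXZ : X ∪ Z = univ)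
    (f g : Attr → Val) :
    (f ≠ g ∧ agreeOn X f g ∧ ¬ agreeOn Y f g) ↔ agreeOn X f g ∧ ¬ agreeOn Z f g := by
  constructor
  · rintro ⟨hne, hX, -⟩
    exact ⟨hX, fun hZ => hne (eq_of_agreeOn_of_union_eq_univ hXZ hX hZ)⟩
  · rintro ⟨hX, hZ⟩
    have hne : f ≠ g := by rintro rfl; exact hZ fun _ _ => rfl
    exact ⟨hne, hX, fun hY => hne (eq_of_agreeOn_of_union_eq_univ hXY hX hY)⟩

section toPair

omit [Fintype Attr] [DecidableEq Attr] [DecidableEq Val]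

variable (X X' : Finset Attr) (f g : Attr → Val)

theorem toPair_fst_eq_iff : (toPair X X' f).1 = (toPair X X' g).1 ↔ agreeOn X f g :=
  ⟨fun h A hA => congrFun h ⟨A, hA⟩, fun h => funext fun A => h A A.2⟩

theorem toPair_snd_eq_iff : (toPair X X' f).2 = (toPair X X' g).2 ↔ agreeOn X' f g :=
  ⟨fun h A hA => congrFun h ⟨A, hA⟩, fun h => funext fun A => h A A.2⟩

end toPair

omit [DecidableEq Val] in
theorem toPair_injective {X X' : Finset Attr} (hXX' : X ∪ X' = univ) :
    Function.Injective (toPair (Val := Val) X X') := fun f g h =>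
  eq_of_agreeOn_of_union_eq_univ hXX' ((toPair_fst_eq_iff X X' f g).mp (congrArg Prod.fst h))
    ((toPair_snd_eq_iff X X' f g).mp (congrArg Prod.snd h))

theorem numVio_fst_image_toPair {X Y X' : Finset Attr} (hXY : X ∪ Y = univ)
    (hXX' : X ∪ X' = univ) (Eh : Finset (Attr → Val)) :
    numVio (fun p q => p.1 = q.1 ∧ p.2 ≠ q.2) (Eh.image (toPair X X')) =
      numVio (fun f g => f ≠ g ∧ agreeOn X f g ∧ ¬ agreeOn Y f g) Eh :=
  numVio_image_of_injective (toPair_injective hXX') (fun f g => by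
    rw [fd_violation_iff hXY hXX', toPair_fst_eq_iff, Ne, toPair_snd_eq_iff]) Eh

theorem numVio_snd_image_toPair {X X' Y' : Finset Attr} (hX'Y' : X' ∪ Y' = univ)
    (hXX' : X ∪ X' = univ) (Eh : Finset (Attr → Val)) :
    numVio (fun p q => p.2 = q.2 ∧ p.1 ≠ q.1) (Eh.image (toPair X X')) =
      numVio (fun f g => f ≠ g ∧ agreeOn X' f g ∧ ¬ agreeOn Y' f g) Eh :=
  numVio_image_of_injective (toPair_injective hXX') (fun f g => by
    rw [fd_violation_iff hX'Y' (union_comm X X' ▸ hXX'), toPair_snd_eq_iff, Ne,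
      toPair_fst_eq_iff]) Eh

theorem costBin_image_toPair {X Y X' Y' : Finset Attr} (hXY : X ∪ Y = univ)
    (hX'Y' : X' ∪ Y' = univ) (hXX' : X ∪ X' = univ) (Dh : Finset (Attr → Val))
    {wh : (Attr → Val) → ℚ} {wp : ((↥X → Val) × (↥X' → Val)) → ℚ}
    (hwp : ∀ f, wp (toPair X X' f) = wh f) (w1 w2 : ℚ) (Eh : Finset (Attr → Val)) :
    costBin X X' (Dh.image (toPair X X')) wp w1 w2 (Eh.image (toPair X X')) =
      costHat X Y X' Y' Dh wh w1 w2 Eh := by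
  have hinj := toPair_injective (Val := Val) hXX'
  rw [costBin, costHat, numVio_fst_image_toPair hXY hXX', numVio_snd_image_toPair hX'Y' hXX',
    ← image_sdiff _ _ hinj, sum_image hinj.injOn]
  simp only [hwp]

theorem forall_subset_le_iff_image {α β γ : Type*} [DecidableEq β] [Preorder γ]
    {c : Finset α → γ} {c' : Finset β → γ} {φ : α → β} {D : Finset α}
    (hc : ∀ E ⊆ D, c' (E.image φ) = c E) {E : Finset α} (hE : E ⊆ D) :
    (∀ E' ⊆ D, c E ≤ c E') ↔ ∀ E' ⊆ D.image φ, c' (E.image φ) ≤ c' E' := by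
  rw [hc E hE]
  constructor
  · intro hopt E' hE'
    obtain ⟨E'', hE'', rfl⟩ := subset_image_iff.mp hE'
    exact (hc E'' hE'').symm ▸ hopt E'' hE''
  · intro hopt E' hE'
    exact hc E' hE' ▸ hopt _ (image_subset_image hE')

theorem matching_constraint_reduction_general (X Y X' Y' : Finset Attr)
    (hXY : X ∪ Y = Finset.univ) (hX'Y' : X' ∪ Y' = Finset.univ)
    (hXX' : X ∪ X' = Finset.univ)
    (Dh : Finset (Attr → Val)) (wh : (Attr → Val) → ℚ) (w1 w2 : ℚ)
    (wp : ((↥X → Val) × (↥X' → Val)) → ℚ)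
    (hwp : ∀ f : Attr → Val, wp (toPair X X' f) = wh f) :
    Function.Injective (toPair (Val := Val) X X') ∧
    (∀ Eh : Finset (Attr → Val),
      numVio (fun f g => f ≠ g ∧ agreeOn X f g ∧ ¬ agreeOn Y f g) Eh =
        numVio (fun p q => p.1 = q.1 ∧ p.2 ≠ q.2) (Eh.image (toPair X X')) ∧
      numVio (fun f g => f ≠ g ∧ agreeOn X' f g ∧ ¬ agreeOn Y' f g) Eh =
        numVio (fun p q => p.2 = q.2 ∧ p.1 ≠ q.1) (Eh.image (toPair X X'))) ∧
    (∀ Eh ⊆ Dh,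
      costHat X Y X' Y' Dh wh w1 w2 Eh =
        costBin X X' (Dh.image (toPair X X')) wp w1 w2 (Eh.image (toPair X X'))) ∧
    (∀ Eh ⊆ Dh,
      ((∀ Eh' ⊆ Dh, costHat X Y X' Y' Dh wh w1 w2 Eh ≤ costHat X Y X' Y' Dh wh w1 w2 Eh') ↔
        (∀ E' ⊆ Dh.image (toPair X X'),
          costBin X X' (Dh.image (toPair X X')) wp w1 w2 (Eh.image (toPair X X')) ≤
            costBin X X' (Dh.image (toPair X X')) wp w1 w2 E'))) := by
  have hcost (Eh : Finset (Attr → Val)) := costBin_image_toPair hXY hX'Y' hXX' Dh hwp w1 w2 Eh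
  exact ⟨toPair_injective hXX',
    fun Eh => ⟨(numVio_fst_image_toPair hXY hXX' Eh).symm,
      (numVio_snd_image_toPair hX'Y' hXX' Eh).symm⟩,
    fun Eh _ => (hcost Eh).symm,
    fun Eh hEh => forall_subset_le_iff_image (fun E _ => hcost E) hEh⟩

/-- Correctness of the reduction from a matching constraint to the binary case:
the map `fh ↦ (fh[X], fh[X'])` is injective, preserves the numbers of violations,
preserves costs, and preserves optimality. -/
theorem matching_constraint_reduction (X Y X' Y' : Finset Attr)
    (hXY : X ∪ Y = Finset.univ) (hX'Y' : X' ∪ Y' = Finset.univ)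
    (hXX' : X ∪ X' = Finset.univ)
    (Dh : Finset (Attr → Val)) (wh : (Attr → Val) → ℚ) (w1 w2 : ℚ)
    (hw : ∀ f ∈ Dh, 0 ≤ wh f) (h1 : 0 ≤ w1) (h2 : 0 ≤ w2)
    (wp : ((↥X → Val) × (↥X' → Val)) → ℚ)
    (hwp : ∀ f : Attr → Val, wp (toPair X X' f) = wh f) :
    Function.Injective (toPair (Val := Val) X X') ∧
    (∀ Eh : Finset (Attr → Val),
      numVio (fun f g => f ≠ g ∧ agreeOn X f g ∧ ¬ agreeOn Y f g) Eh =
        numVio (fun p q => p.1 = q.1 ∧ p.2 ≠ q.2) (Eh.image (toPair X X')) ∧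
      numVio (fun f g => f ≠ g ∧ agreeOn X' f g ∧ ¬ agreeOn Y' f g) Eh =
        numVio (fun p q => p.2 = q.2 ∧ p.1 ≠ q.1) (Eh.image (toPair X X'))) ∧
    (∀ Eh ⊆ Dh,
      costHat X Y X' Y' Dh wh w1 w2 Eh =
        costBin X X' (Dh.image (toPair X X')) wp w1 w2 (Eh.image (toPair X X'))) ∧
    (∀ Eh ⊆ Dh,
      ((∀ Eh' ⊆ Dh, costHat X Y X' Y' Dh wh w1 w2 Eh ≤ costHat X Y X' Y' Dh wh w1 w2 Eh') ↔
        (∀ E' ⊆ Dh.image (toPair X X'),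
          costBin X X' (Dh.image (toPair X X')) wp w1 w2 (Eh.image (toPair X X')) ≤
            costBin X X' (Dh.image (toPair X X')) wp w1 w2 E'))) :=
  matching_constraint_reduction_general X Y X' Y' hXY hX'Y' hXX' Dh wh w1 w2 wp hwp
end

section
/- Let Δ be a set of FDs over {A_1,…,A_k} and A an attribute that is an lhs or consensus attribute of every FD of Δ. Let w₀ be the total weight of the FDs of which A is a consensus attribute, and let Δ' = Δ − A (remove A from all FDs, then remove trivial FDs). Let D be a database with blocks D_1,…,D_m by A-value. Then for every subset E ⊆ D with E_i = E ∩ D_i: Σ_{φ∈Δ} w_φ·|vio(E,φ)| = w₀·Σ_{1≤i<j≤m} |E_i|·|E_j| + Σ_{i=1}^m Σ_{φ'∈Δ'} w_{φ'}·|vio(E_i, φ')|, where the weight of φ' ∈ Δ' is the sum of weights of FDs of Δ mapping to it. -/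
attribute [local instance] Classical.propDecidable

open Finset

/-- The pair of distinct facts `{f,g}` violates the FD `X → Y`. -/
def violatesFD {Attr Val : Type*} (φ : Finset Attr × Finset Attr)
    (f g : Attr → Val) : Prop :=
  f ≠ g ∧ agreeOn φ.1 f g ∧ ¬ agreeOn φ.2 f g

/-- Removing the attribute `A` from an FD. -/
def rmA {Attr : Type*} [DecidableEq Attr] (A : Attr)
    (φ : Finset Attr × Finset Attr) : Finset Attr × Finset Attr :=
  (φ.1.erase A, φ.2.erase A)

/-!
Count ordered violating pairs instead of unordered ones (there are twice as many, violation being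
symmetric) and split them according to whether the two facts agree on `A`. A pair that agrees on
`A` lies in a single block, and there erasing `A` from an FD does not change whether the pair
violates it. A pair that disagrees on `A` violates no FD with `A` on its lhs, so by the hypothesis
on `A` it violates exactly the consensus FDs `∅ → Y` with `A ∈ Y`, all of them. Finally, grouping
the FDs of `Δ` by their image under `rmA A` yields the weights of `Δ − A`; trivial FDs have no
violations and can be dropped.
-/

lemma two_mul_numVio {F : Type*} [DecidableEq F] {r : F → F → Prop} (hr : ∀ f g, r f g → r g f)
    (E : Finset F) : 2 * numVio r E = #{q ∈ E.offDiag | r q.1 q.2} := by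
  have himage : {q ∈ E.offDiag | r q.1 q.2}.image (fun q => ({q.1, q.2} : Finset F)) =
      {p ∈ E.powersetCard 2 | ∀ f ∈ p, ∀ g ∈ p, f ≠ g → r f g} := by
    ext p
    simp only [mem_image, mem_filter, mem_offDiag, mem_powersetCard, card_eq_two]
    constructor
    · rintro ⟨⟨f, g⟩, ⟨⟨hf, hg, hfg⟩, hfg'⟩, rfl⟩
      refine ⟨⟨?_, f, g, hfg, rfl⟩, ?_⟩
      · simp [insert_subset_iff, hf, hg]
      · simp only [mem_insert, mem_singleton]
        rintro a (rfl | rfl) b (rfl | rfl) hab <;>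
          first | exact absurd rfl hab | assumption | exact hr _ _ hfg'
    · rintro ⟨⟨hsub, f, g, hfg, rfl⟩, hall⟩
      exact ⟨(f, g), ⟨⟨hsub (by simp), hsub (by simp), hfg⟩, hall f (by simp) g (by simp) hfg⟩,
        rfl⟩
  have hfiber : ∀ p ∈ {q ∈ E.offDiag | r q.1 q.2}.image (fun q => ({q.1, q.2} : Finset F)),
      #{q ∈ {q ∈ E.offDiag | r q.1 q.2} | ({q.1, q.2} : Finset F) = p} = 2 := by
    simp only [mem_image, mem_filter, mem_offDiag]
    rintro _ ⟨⟨f, g⟩, ⟨⟨hf, hg, hfg⟩, hfg'⟩, rfl⟩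
    rw [card_eq_two]
    refine ⟨(f, g), (g, f), by simp [hfg], ?_⟩
    ext ⟨a, b⟩
    simp only [mem_filter, mem_offDiag, ← coe_inj, coe_pair, Set.pair_eq_pair_iff, mem_insert,
      mem_singleton, Prod.mk.injEq]
    constructor
    · exact And.right
    · rintro (⟨rfl, rfl⟩ | ⟨rfl, rfl⟩)
      · exact ⟨⟨⟨hf, hg, hfg⟩, hfg'⟩, .inl ⟨rfl, rfl⟩⟩
      · exact ⟨⟨⟨hg, hf, Ne.symm hfg⟩, hr _ _ hfg'⟩, .inr ⟨rfl, rfl⟩⟩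
  rw [card_eq_sum_card_image (fun q => ({q.1, q.2} : Finset F)), sum_congr rfl hfiber,
    sum_const, himage, smul_eq_mul, mul_comm, numVio]

section offDiagBlocks

variable {F β : Type*} [DecidableEq β] (E : Finset F) (k : F → β)

lemma card_offDiag_filter_ne_comp :
    #{q ∈ E.offDiag | k q.1 ≠ k q.2} =
      ∑ p ∈ (E.image k).offDiag, #{f ∈ E | k f = p.1} * #{f ∈ E | k f = p.2} := by
  have hmaps : ∀ q ∈ {q ∈ E.offDiag | k q.1 ≠ k q.2}, (k q.1, k q.2) ∈ (E.image k).offDiag := by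
    simp only [mem_filter, mem_offDiag, mem_image]
    exact fun q ⟨⟨h1, h2, _⟩, hne⟩ => ⟨⟨q.1, h1, rfl⟩, ⟨q.2, h2, rfl⟩, hne⟩
  rw [card_eq_sum_card_fiberwise hmaps]
  refine sum_congr rfl fun ⟨v, w⟩ hvw => ?_
  rw [← card_product]
  congr 1
  ext ⟨f, g⟩
  simp only [mem_offDiag] at hvw
  simp only [mem_filter, mem_offDiag, mem_product, Prod.ext_iff]
  constructor
  · rintro ⟨⟨⟨hf, hg, -⟩, -⟩, rfl, rfl⟩
    exact ⟨⟨hf, rfl⟩, hg, rfl⟩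
  · rintro ⟨⟨hf, rfl⟩, hg, rfl⟩
    exact ⟨⟨⟨hf, hg, fun h => hvw.2.2 (congrArg k h)⟩, hvw.2.2⟩, rfl, rfl⟩

lemma card_offDiag_filter_and_eq_comp (r : F → F → Prop) :
    #{q ∈ E.offDiag | r q.1 q.2 ∧ k q.1 = k q.2} =
      ∑ v ∈ E.image k, #{q ∈ {f ∈ E | k f = v}.offDiag | r q.1 q.2} := by
  have hmaps : ∀ q ∈ {q ∈ E.offDiag | r q.1 q.2 ∧ k q.1 = k q.2}, k q.1 ∈ E.image k :=
    fun q hq => mem_image_of_mem k (mem_offDiag.mp (mem_filter.mp hq).1).1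
  rw [card_eq_sum_card_fiberwise hmaps]
  refine sum_congr rfl fun v _ => congrArg card ?_
  ext ⟨f, g⟩
  simp only [mem_filter, mem_offDiag]
  constructor
  · rintro ⟨⟨⟨hf, hg, hfg⟩, hr, hk⟩, rfl⟩
    exact ⟨⟨⟨hf, rfl⟩, ⟨hg, hk.symm⟩, hfg⟩, hr⟩
  · rintro ⟨⟨⟨hf, rfl⟩, ⟨hg, hk⟩, hfg⟩, hr⟩
    exact ⟨⟨⟨hf, hg, hfg⟩, hr, hk.symm⟩, rfl⟩

end offDiagBlocks

lemma sum_image_filter_sum_fiber_mul {ι κ R : Type*} [DecidableEq κ] [NonUnitalNonAssocSemiring R]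
    (s : Finset ι) (g : ι → κ) (w : ι → R) (h : κ → R) (p : κ → Prop) [DecidablePred p]
    (hp : ∀ j, ¬ p j → h j = 0) :
    ∑ j ∈ {j ∈ s.image g | p j}, (∑ i ∈ {i ∈ s | g i = j}, w i) * h j = ∑ i ∈ s, w i * h (g i) := by
  rw [sum_filter_of_ne fun j _ hj => by_contra fun hpj => hj (by rw [hp j hpj, mul_zero]),
    ← sum_fiberwise_of_maps_to (fun i hi => mem_image_of_mem g hi) (fun i => w i * h (g i))]
  refine sum_congr rfl fun j _ => ?_
  rw [sum_mul]
  exact sum_congr rfl fun i hi => by rw [(mem_filter.mp hi).2]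

section violations

variable {Attr Val : Type*} {φ : Finset Attr × Finset Attr} {A : Attr}
  {f g : Attr → Val}

lemma violatesFD_symm (h : violatesFD φ f g) : violatesFD φ g f :=
  ⟨h.1.symm, fun a ha => (h.2.1 a ha).symm, fun hc => h.2.2 fun a ha => (hc a ha).symm⟩

lemma not_violatesFD_of_subset (h : φ.2 ⊆ φ.1) : ¬ violatesFD φ f g :=
  fun ⟨_, h1, h2⟩ => h2 fun a ha => h1 a (h ha)

lemma agreeOn_erase_iff [DecidableEq Attr] {X : Finset Attr} (h : f A = g A) :
    agreeOn (X.erase A) f g ↔ agreeOn X f g := by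
  refine ⟨fun hX a ha => ?_, fun hX a ha => hX a (mem_of_mem_erase ha)⟩
  by_cases haA : a = A
  · exact haA ▸ h
  · exact hX a (mem_erase.mpr ⟨haA, ha⟩)

lemma violatesFD_rmA_iff [DecidableEq Attr] (h : f A = g A) :
    violatesFD (rmA A φ) f g ↔ violatesFD φ f g := by
  simp only [violatesFD, rmA, agreeOn_erase_iff h]

lemma violatesFD_and_ne_iff (hφ : A ∈ φ.1 ∨ (φ.1 = ∅ ∧ A ∈ φ.2)) :
    violatesFD φ f g ∧ f A ≠ g A ↔ (φ.1 = ∅ ∧ A ∈ φ.2) ∧ f A ≠ g A := by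
  refine ⟨fun ⟨⟨_, h1, _⟩, hA⟩ => ⟨hφ.resolve_left fun hA1 => hA (h1 A hA1), hA⟩,
    fun ⟨⟨h1, h2⟩, hA⟩ => ⟨⟨?_, ?_, ?_⟩, hA⟩⟩
  · exact fun hfg => hA (congrFun hfg A)
  · simp [agreeOn, h1]
  · exact fun h => hA (h A h2)

lemma numVio_violatesFD_of_subset [DecidableEq (Attr → Val)] (h : φ.2 ⊆ φ.1)
    (E : Finset (Attr → Val)) : numVio (violatesFD φ) E = 0 := by
  have := two_mul_numVio (r := violatesFD φ) (fun _ _ => violatesFD_symm) E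
  rw [filter_false_of_mem fun q _ => not_violatesFD_of_subset h, card_empty] at this
  omega

variable [DecidableEq Attr] [DecidableEq Val]

lemma card_offDiag_violatesFD (hφ : A ∈ φ.1 ∨ (φ.1 = ∅ ∧ A ∈ φ.2)) (E : Finset (Attr → Val)) :
    #{q ∈ E.offDiag | violatesFD φ q.1 q.2} =
      (if φ.1 = ∅ ∧ A ∈ φ.2 then
        ∑ p ∈ (E.image (fun f => f A)).offDiag,
          #{f ∈ E | f A = p.1} * #{f ∈ E | f A = p.2} else 0) +
      ∑ v ∈ E.image (fun f => f A),
        #{q ∈ {f ∈ E | f A = v}.offDiag | violatesFD (rmA A φ) q.1 q.2} := by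
  rw [← card_filter_add_card_filter_not (p := fun q => q.1 A ≠ q.2 A), filter_filter,
    filter_filter]
  congr 1
  · rw [filter_congr fun q _ => violatesFD_and_ne_iff hφ]
    split_ifs with hc
    · simp only [hc, true_and]
      exact card_offDiag_filter_ne_comp E (fun f => f A)
    · simp [hc]
  · rw [filter_congr fun q _ => by
      rw [not_not, and_congr_left_iff]; exact fun h => (violatesFD_rmA_iff h).symm]
    exact card_offDiag_filter_and_eq_comp E (fun f => f A) (violatesFD (rmA A φ))

lemma numVio_violatesFD_eq [DecidableEq (Attr → Val)] (hφ : A ∈ φ.1 ∨ (φ.1 = ∅ ∧ A ∈ φ.2))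
    (E : Finset (Attr → Val)) :
    (numVio (violatesFD φ) E : ℚ) =
      (if φ.1 = ∅ ∧ A ∈ φ.2 then
        (1 / 2 : ℚ) * ∑ p ∈ (E.image (fun f => f A)).offDiag,
          (#{f ∈ E | f A = p.1} : ℚ) * (#{f ∈ E | f A = p.2} : ℚ) else 0) +
      ∑ v ∈ E.image (fun f => f A), (numVio (violatesFD (rmA A φ)) {f ∈ E | f A = v} : ℚ) := by
  have half : ∀ ψ (E' : Finset (Attr → Val)),
      (numVio (violatesFD ψ) E' : ℚ) = 1 / 2 * #{q ∈ E'.offDiag | violatesFD ψ q.1 q.2} := by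
    intro ψ E'
    rw [← two_mul_numVio (r := violatesFD ψ) (fun _ _ => violatesFD_symm) E']
    push_cast
    ring
  simp only [half, card_offDiag_violatesFD hφ E]
  push_cast
  rw [mul_add, mul_sum, apply_ite (fun x : ℚ => 1 / 2 * x), mul_zero]

end violations

theorem lc_simplify_decomposition_general {Attr Val : Type*}
    [Fintype Attr] [DecidableEq Attr] [DecidableEq Val]
    (Δ : Finset (Finset Attr × Finset Attr))
    (wΔ : Finset Attr × Finset Attr → ℚ)
    (A : Attr)
    (hA : ∀ φ ∈ Δ, A ∈ φ.1 ∨ (φ.1 = ∅ ∧ A ∈ φ.2))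
    (E : Finset (Attr → Val)) :
    (∑ φ ∈ Δ, wΔ φ * (numVio (violatesFD φ) E : ℚ)) =
      (∑ φ ∈ Δ.filter (fun φ => φ.1 = ∅ ∧ A ∈ φ.2), wΔ φ) *
        ((1 / 2 : ℚ) * ∑ p ∈ (E.image (fun f => f A)).offDiag,
          ((E.filter (fun f => f A = p.1)).card : ℚ) *
            ((E.filter (fun f => f A = p.2)).card : ℚ)) +
      ∑ v ∈ E.image (fun f => f A),
        ∑ φ' ∈ (Δ.image (rmA A)).filter (fun ψ => ¬ ψ.2 ⊆ ψ.1),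
          (∑ φ ∈ Δ.filter (fun φ => rmA A φ = φ'), wΔ φ) *
            (numVio (violatesFD φ') (E.filter (fun f => f A = v)) : ℚ) := by
  rw [sum_congr rfl fun φ hφ => by rw [numVio_violatesFD_eq (hA φ hφ) E]]
  simp only [mul_add, sum_add_distrib, mul_ite, mul_zero, ← sum_filter]
  congr 1
  · rw [sum_mul]
  · simp only [mul_sum]
    rw [sum_comm]
    refine sum_congr rfl fun v _ => (sum_image_filter_sum_fiber_mul Δ (rmA A) wΔ
      (fun ψ => (numVio (violatesFD ψ) {f ∈ E | f A = v} : ℚ)) (fun ψ => ¬ ψ.2 ⊆ ψ.1) ?_).symm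
    intro ψ hψ
    rw [numVio_violatesFD_of_subset (not_not.mp hψ), Nat.cast_zero]

/-- Decomposition of the violation penalty along the blocks of an attribute `A`
that is an lhs or consensus attribute of every FD of `Δ`:
`Σ_{φ∈Δ} w_φ·|vio(E,φ)| = w₀·Σ_{i<j}|E_i||E_j| + Σ_i Σ_{φ'∈Δ−A} w_{φ'}·|vio(E_i,φ')|`,
where `w₀` is the total weight of the consensus FDs, blocks are by `A`-value, and
the weight of `φ' ∈ Δ − A` (trivial FDs removed) is the total weight of the FDs
of `Δ` mapping to it. -/
theorem lc_simplify_decomposition {Attr Val : Type*}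
    [Fintype Attr] [DecidableEq Attr] [DecidableEq Val]
    (Δ : Finset (Finset Attr × Finset Attr))
    (wΔ : Finset Attr × Finset Attr → ℚ)
    (hwΔ : ∀ φ ∈ Δ, 0 ≤ wΔ φ)
    (A : Attr)
    (hA : ∀ φ ∈ Δ, A ∈ φ.1 ∨ (φ.1 = ∅ ∧ A ∈ φ.2))
    (E : Finset (Attr → Val)) :
    (∑ φ ∈ Δ, wΔ φ * (numVio (violatesFD φ) E : ℚ)) =
      (∑ φ ∈ Δ.filter (fun φ => φ.1 = ∅ ∧ A ∈ φ.2), wΔ φ) *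
        ((1 / 2 : ℚ) * ∑ p ∈ (E.image (fun f => f A)).offDiag,
          ((E.filter (fun f => f A = p.1)).card : ℚ) *
            ((E.filter (fun f => f A = p.2)).card : ℚ)) +
      ∑ v ∈ E.image (fun f => f A),
        ∑ φ' ∈ (Δ.image (rmA A)).filter (fun ψ => ¬ ψ.2 ⊆ ψ.1),
          (∑ φ ∈ Δ.filter (fun φ => rmA A φ = φ'), wΔ φ) *
            (numVio (violatesFD φ') (E.filter (fun f => f A = v)) : ℚ) :=
  lc_simplify_decomposition_general Δ wΔ A hA E
end

section
/- Let Δ = {A→B, B→A, B→C} over R(A,B,C). If soft repairing for Δ is solvable in polynomial time, then computing a cardinality repair for {A→B, B→C} is solvable in polynomial time. More precisely: given a database D₀ over R(A,B,C) with unit fact weights, setting w_{A→B} = w_{B→C} = M for M greater than Σ_{f∈D₀} w_f and w_{B→A} = 0, any optimal subset E of D₀ with respect to the soft semantics satisfies E ⊨ {A→B, B→C} and E is a maximum-cardinality consistent subset for {A→B, B→C}. -/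
attribute [local instance] Classical.propDecidable

open Finset

variable {α β γ : Type*} [DecidableEq α] [DecidableEq β] [DecidableEq γ]

/-- A pair violates `A → B` over `R(A,B,C)`. -/
def violAB (f g : α × β × γ) : Prop := f.1 = g.1 ∧ f.2.1 ≠ g.2.1

/-- A pair violates `B → C` over `R(A,B,C)`. -/
def violBC (f g : α × β × γ) : Prop := f.2.1 = g.2.1 ∧ f.2.2 ≠ g.2.2

/-- A pair violates `B → A` over `R(A,B,C)`. -/
def violBA (f g : α × β × γ) : Prop := f.2.1 = g.2.1 ∧ f.1 ≠ g.1

/-- Soft cost for `Δ = {A→B, B→A, B→C}` with unit fact weights,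
`w_{A→B} = w_{B→C} = M` and `w_{B→A} = 0`. -/
noncomputable def costM (D₀ : Finset (α × β × γ)) (M : ℚ)
    (E : Finset (α × β × γ)) : ℚ :=
  ((D₀ \ E).card : ℚ) + M * (numVio violAB E : ℚ) + M * (numVio violBC E : ℚ) +
    0 * (numVio violBA E : ℚ)

/-! The empty subset costs `|D₀| < M`, so an optimal `E` costs less than `M` and therefore
violates neither weight-`M` constraint, while the weight-`0` constraint `B → A` is free. On
subsets violating neither, the cost is the number of deleted facts, so optimality of `E` is
maximality of `|E|`. -/

theorem numVio_eq_zero_iff {F : Type*} [DecidableEq F] (viol : F → F → Prop) [Std.Symm viol]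
    [Std.Irrefl viol] (E : Finset F) : numVio viol E = 0 ↔ ∀ f ∈ E, ∀ g ∈ E, ¬ viol f g := by
  simp only [numVio, card_eq_zero, filter_eq_empty_iff, mem_powersetCard]
  constructor
  · intro h f hf g hg hfg
    have hne : f ≠ g := by rintro rfl; exact irrefl f hfg
    refine h ⟨insert_subset hf (singleton_subset_iff.2 hg), card_pair hne⟩ ?_
    simp only [mem_insert, mem_singleton]
    rintro a (rfl | rfl) b (rfl | rfl) hab
    exacts [absurd rfl hab, hfg, symm hfg, absurd rfl hab]
  · rintro h p ⟨hp, hcard⟩ hall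
    obtain ⟨f, g, hne, rfl⟩ := card_eq_two.1 hcard
    exact h f (hp (mem_insert_self f _)) g (hp (mem_insert_of_mem (mem_singleton_self g)))
      (hall f (mem_insert_self f _) g (mem_insert_of_mem (mem_singleton_self g)) hne)

instance violAB_symm {α β γ : Type*} : Std.Symm (violAB : α × β × γ → α × β × γ → Prop) :=
  ⟨fun _ _ h => ⟨h.1.symm, Ne.symm h.2⟩⟩

instance violAB_irrefl {α β γ : Type*} : Std.Irrefl (violAB : α × β × γ → α × β × γ → Prop) :=
  ⟨fun _ h => h.2 rfl⟩

instance violBC_symm {α β γ : Type*} : Std.Symm (violBC : α × β × γ → α × β × γ → Prop) :=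
  ⟨fun _ _ h => ⟨h.1.symm, Ne.symm h.2⟩⟩

instance violBC_irrefl {α β γ : Type*} : Std.Irrefl (violBC : α × β × γ → α × β × γ → Prop) :=
  ⟨fun _ h => h.2 rfl⟩

theorem costM_eq_card_sdiff_add (D₀ : Finset (α × β × γ)) (M : ℚ) (E : Finset (α × β × γ)) :
    costM D₀ M E = #(D₀ \ E) + M * (numVio violAB E + numVio violBC E) := by
  unfold costM; ring

theorem costM_empty (D₀ : Finset (α × β × γ)) (M : ℚ) : costM D₀ M ∅ = #D₀ := by
  rw [costM_eq_card_sdiff_add, (numVio_eq_zero_iff violAB ∅).2 (by simp),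
    (numVio_eq_zero_iff violBC ∅).2 (by simp)]
  simp

theorem numVio_eq_zero_of_costM_lt {D₀ E : Finset (α × β × γ)} {M : ℚ} (hM : 0 ≤ M)
    (h : costM D₀ M E < M) : numVio violAB E = 0 ∧ numVio violBC E = 0 := by
  by_contra hvio
  have hone : (1 : ℚ) ≤ numVio violAB E + numVio violBC E := by
    norm_cast; omega
  have : M ≤ costM D₀ M E := by
    rw [costM_eq_card_sdiff_add]
    nlinarith [Nat.cast_nonneg (α := ℚ) #(D₀ \ E)]
  linarith

theorem card_le_card_of_costM_le {D₀ E E' : Finset (α × β × γ)} {M : ℚ} (hM : 0 ≤ M)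
    (hE' : E' ⊆ D₀) (hAB : numVio violAB E' = 0) (hBC : numVio violBC E' = 0)
    (h : costM D₀ M E ≤ costM D₀ M E') : #E' ≤ #E := by
  rw [costM_eq_card_sdiff_add, costM_eq_card_sdiff_add, hAB, hBC] at h
  have hvio : (0 : ℚ) ≤ M * (numVio violAB E + numVio violBC E) := by positivity
  have hsdiff : #(D₀ \ E) ≤ #(D₀ \ E') := by
    push_cast at h
    exact_mod_cast (by linarith : (#(D₀ \ E) : ℚ) ≤ #(D₀ \ E'))
  have := le_card_sdiff E D₀
  rw [card_sdiff_of_subset hE'] at hsdiff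
  have := card_le_card hE'
  omega

theorem soft_repair_simulates_cardinality_repair_general
    (D₀ : Finset (α × β × γ)) (M : ℚ) (hM : (D₀.card : ℚ) < M)
    (E : Finset (α × β × γ))
    (hopt : ∀ E' ⊆ D₀, costM D₀ M E ≤ costM D₀ M E') :
    (∀ f ∈ E, ∀ g ∈ E, ¬ violAB f g) ∧
    (∀ f ∈ E, ∀ g ∈ E, ¬ violBC f g) ∧
    (∀ E' ⊆ D₀, (∀ f ∈ E', ∀ g ∈ E', ¬ violAB f g ∧ ¬ violBC f g) →
      E'.card ≤ E.card) := by
  have hM₀ : 0 ≤ M := (Nat.cast_nonneg _).trans hM.le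
  have hcost : costM D₀ M E < M := (costM_empty D₀ M ▸ hopt ∅ (empty_subset _)).trans_lt hM
  obtain ⟨hAB, hBC⟩ := numVio_eq_zero_of_costM_lt hM₀ hcost
  refine ⟨(numVio_eq_zero_iff _ E).1 hAB, (numVio_eq_zero_iff _ E).1 hBC, ?_⟩
  intro E' hE' hcons
  exact card_le_card_of_costM_le hM₀ hE'
    ((numVio_eq_zero_iff _ E').2 fun f hf g hg => (hcons f hf g hg).1)
    ((numVio_eq_zero_iff _ E').2 fun f hf g hg => (hcons f hf g hg).2) (hopt E' hE')

/-- Hardness transfer: with `Δ = {A→B, B→A, B→C}`, unit fact weights,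
`w_{A→B} = w_{B→C} = M > Σ_{f∈D₀} w_f = |D₀|` and `w_{B→A} = 0`, every optimal
subset `E` of `D₀` satisfies `{A→B, B→C}` and is a maximum-cardinality
consistent subset for `{A→B, B→C}`, i.e. a cardinality repair. -/
theorem soft_repair_simulates_cardinality_repair
    (D₀ : Finset (α × β × γ)) (M : ℚ) (hM : (D₀.card : ℚ) < M)
    (E : Finset (α × β × γ)) (hE : E ⊆ D₀)
    (hopt : ∀ E' ⊆ D₀, costM D₀ M E ≤ costM D₀ M E') :
    (∀ f ∈ E, ∀ g ∈ E, ¬ violAB f g) ∧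
    (∀ f ∈ E, ∀ g ∈ E, ¬ violBC f g) ∧
    (∀ E' ⊆ D₀, (∀ f ∈ E', ∀ g ∈ E', ¬ violAB f g ∧ ¬ violBC f g) →
      E'.card ≤ E.card) :=
  soft_repair_simulates_cardinality_repair_general D₀ M hM E hopt
end

section
/- Let D be a database over R(A,B) and Δ = {A→B, B→A} with w_{A→B}, w_{B→A} both strictly greater than 2·max_{f∈D} w_f. Then every optimal subset E of D satisfies Δ (has no violations), i.e., E is a matching in the bipartite graph whose left vertices are A-values and right vertices are B-values, and E maximizes Σ_{f∈E} w_f among matchings. -/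
/-!
Deleting a fact `f` of a violating pair `{f, g}` pays `w f` but removes the violation `{f, g}`,
whose weight exceeds `w f`, and creates no new one; so an optimal subset has no violations.
On violation-free subsets the cost is the weight of the deleted facts, so minimizing it
maximizes the retained weight.
-/

attribute [local instance] Classical.propDecidable

open Finset

variable {α β : Type*} [DecidableEq α] [DecidableEq β]

/-- Cost of `E ⊆ D` for `Δ = {A→B, B→A}` with FD weights `w1, w2`. -/
noncomputable def costMatch (D : Finset (α × β)) (w : α × β → ℚ) (w1 w2 : ℚ)
    (E : Finset (α × β)) : ℚ :=
  (∑ f ∈ D \ E, w f) +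
    w1 * (numVio (fun f g => f.1 = g.1 ∧ f.2 ≠ g.2) E : ℚ) +
    w2 * (numVio (fun f g => f.2 = g.2 ∧ f.1 ≠ g.1) E : ℚ)

section numVio

variable {F : Type*} [DecidableEq F] (viol : F → F → Prop)

theorem numVio_mono {E E' : Finset F} (h : E' ⊆ E) : numVio viol E' ≤ numVio viol E := by
  refine card_le_card fun p hp => ?_
  simp only [mem_filter, mem_powersetCard] at hp ⊢
  exact ⟨⟨hp.1.1.trans h, hp.1.2⟩, hp.2⟩

theorem numVio_eq_zero {E : Finset F} (h : ∀ f ∈ E, ∀ g ∈ E, f ≠ g → ¬ viol f g) :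
    numVio viol E = 0 := by
  unfold numVio
  simp only [card_eq_zero, filter_eq_empty_iff, mem_powersetCard]
  rintro p ⟨hpE, hcard⟩ hviol
  obtain ⟨f, g, hfg, rfl⟩ := card_eq_two.mp hcard
  exact h f (hpE (by simp)) g (hpE (by simp)) hfg (hviol f (by simp) g (by simp) hfg)

theorem numVio_erase_lt {E : Finset F} {f g : F} (hf : f ∈ E) (hg : g ∈ E) (hfg : f ≠ g)
    (hviol : viol f g) (hviol' : viol g f) : numVio viol (E.erase f) < numVio viol E := by
  unfold numVio
  refine card_lt_card ⟨fun p hp => ?_, fun hsub => ?_⟩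
  · simp only [mem_filter, mem_powersetCard] at hp ⊢
    exact ⟨⟨hp.1.1.trans (erase_subset _ _), hp.1.2⟩, hp.2⟩
  · have hpair := @hsub {f, g}
    simp only [mem_filter, mem_powersetCard, card_pair hfg, insert_subset_iff,
      singleton_subset_iff, mem_erase, mem_insert, mem_singleton, and_true] at hpair
    refine (hpair ⟨⟨hf, hg⟩, ?_⟩).1.1.1 rfl
    rintro a (rfl | rfl) b (rfl | rfl) hab <;> first | exact absurd rfl hab | assumption

end numVio

theorem costMatch_erase_lt {D E : Finset (α × β)} {w : α × β → ℚ} {w1 w2 : ℚ}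
    {f g : α × β} (hE : E ⊆ D) (hf : f ∈ E) (hg : g ∈ E) (hfg : f ≠ g)
    (hshare : f.1 = g.1 ∨ f.2 = g.2) (hwf : 0 ≤ w f) (hw1 : w f < w1) (hw2 : w f < w2) :
    costMatch D w w1 w2 (E.erase f) < costMatch D w w1 w2 E := by
  set v1 : α × β → α × β → Prop := fun f g => f.1 = g.1 ∧ f.2 ≠ g.2
  set v2 : α × β → α × β → Prop := fun f g => f.2 = g.2 ∧ f.1 ≠ g.1
  have hsum : ∑ x ∈ D \ E.erase f, w x = w f + ∑ x ∈ D \ E, w x := by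
    rw [sdiff_erase (hE hf), sum_insert (by simp [hf])]
  have hle1 : (numVio v1 (E.erase f) : ℚ) ≤ numVio v1 E := by
    exact_mod_cast numVio_mono v1 (erase_subset f E)
  have hle2 : (numVio v2 (E.erase f) : ℚ) ≤ numVio v2 E := by
    exact_mod_cast numVio_mono v2 (erase_subset f E)
  have hdrop : (numVio v1 (E.erase f) : ℚ) + 1 ≤ numVio v1 E ∨
      (numVio v2 (E.erase f) : ℚ) + 1 ≤ numVio v2 E := by
    rcases hshare with h | h
    · have h2 : f.2 ≠ g.2 := fun h2 => hfg (Prod.ext h h2)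
      left
      exact_mod_cast numVio_erase_lt v1 hf hg hfg ⟨h, h2⟩ ⟨h.symm, h2.symm⟩
    · have h1 : f.1 ≠ g.1 := fun h1 => hfg (Prod.ext h1 h)
      right
      exact_mod_cast numVio_erase_lt v2 hf hg hfg ⟨h, h1⟩ ⟨h.symm, h1.symm⟩
  simp only [costMatch, hsum]
  rcases hdrop with h | h <;> nlinarith

theorem eq_of_costMatch_optimal {D E : Finset (α × β)} {w : α × β → ℚ} {w1 w2 : ℚ}
    (hw : ∀ f ∈ D, 0 ≤ w f) (hw1 : ∀ f ∈ D, w f < w1) (hw2 : ∀ f ∈ D, w f < w2)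
    (hE : E ⊆ D) (hopt : ∀ E' ⊆ D, costMatch D w w1 w2 E ≤ costMatch D w w1 w2 E')
    {f g : α × β} (hf : f ∈ E) (hg : g ∈ E) (hshare : f.1 = g.1 ∨ f.2 = g.2) : f = g := by
  by_contra hfg
  have hfD := hE hf
  exact (costMatch_erase_lt hE hf hg hfg hshare (hw f hfD) (hw1 f hfD) (hw2 f hfD)).not_ge
    (hopt _ ((erase_subset f E).trans hE))

theorem costMatch_eq_sum_sdiff {D E : Finset (α × β)} {w : α × β → ℚ} {w1 w2 : ℚ}
    (h1 : ∀ f ∈ E, ∀ g ∈ E, f.1 = g.1 → f = g) (h2 : ∀ f ∈ E, ∀ g ∈ E, f.2 = g.2 → f = g) :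
    costMatch D w w1 w2 E = ∑ f ∈ D \ E, w f := by
  rw [costMatch, numVio_eq_zero _ fun f hf g hg hfg h => hfg (h1 f hf g hg h.1),
    numVio_eq_zero _ fun f hf g hg hfg h => hfg (h2 f hf g hg h.1)]
  simp

/-- When both FD weights exceed twice every fact weight, every optimal subset of
`D` w.r.t. `Δ = {A→B, B→A}` has no violations — i.e. it is a partial matching of
the bipartite graph of `A`- and `B`-values — and it maximizes the total retained
weight among all matchings contained in `D`. -/
theorem heavy_fd_weights_give_max_weight_matching
    (D : Finset (α × β)) (w : α × β → ℚ) (w1 w2 : ℚ)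
    (hw : ∀ f ∈ D, 0 ≤ w f)
    (hw1 : ∀ f ∈ D, 2 * w f < w1) (hw2 : ∀ f ∈ D, 2 * w f < w2)
    (E : Finset (α × β)) (hE : E ⊆ D)
    (hopt : ∀ E' ⊆ D, costMatch D w w1 w2 E ≤ costMatch D w w1 w2 E') :
    (∀ f ∈ E, ∀ g ∈ E, f.1 = g.1 → f = g) ∧
    (∀ f ∈ E, ∀ g ∈ E, f.2 = g.2 → f = g) ∧
    (∀ E' ⊆ D, (∀ f ∈ E', ∀ g ∈ E', f.1 = g.1 → f = g) →
      (∀ f ∈ E', ∀ g ∈ E', f.2 = g.2 → f = g) →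
      (∑ f ∈ E', w f) ≤ ∑ f ∈ E, w f) := by
  have hw1' : ∀ f ∈ D, w f < w1 := fun f hf => by linarith [hw f hf, hw1 f hf]
  have hw2' : ∀ f ∈ D, w f < w2 := fun f hf => by linarith [hw f hf, hw2 f hf]
  have hm1 : ∀ f ∈ E, ∀ g ∈ E, f.1 = g.1 → f = g := fun f hf g hg h =>
    eq_of_costMatch_optimal hw hw1' hw2' hE hopt hf hg (Or.inl h)
  have hm2 : ∀ f ∈ E, ∀ g ∈ E, f.2 = g.2 → f = g := fun f hf g hg h =>
    eq_of_costMatch_optimal hw hw1' hw2' hE hopt hf hg (Or.inr h)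
  refine ⟨hm1, hm2, fun E' hE' hm1' hm2' => ?_⟩
  have hcost := hopt E' hE'
  rw [costMatch_eq_sum_sdiff hm1 hm2, costMatch_eq_sum_sdiff hm1' hm2'] at hcost
  linarith [sum_sdiff hE (f := w), sum_sdiff hE' (f := w)]
end
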